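/- arXiv:2410.19638 — 4 statements merged into one kernel-verified Lean document; each statement's English description precedes it below -/
import Mathlib

section
/- In any swap sequence on a graph, if some pair of tokens t1, t2 swap with each other at two different steps, then removing both of those swaps from the sequence yields a shorter sequence producing the same final configuration. -/
/-!
Swapping along an edge `(v₁, v₂)` on top of a configuration `g` is the same as first exchanging
the two tokens `g⁻¹ v₁, g⁻¹ v₂` that sit there and then placing the tokens by `g`, so each
such swap can be moved to the front of the sequence as a permutation of tokens. Both swaps of
the pair `t₁, t₂` thus become the same transposition `swap t₁ t₂` of tokens, and they cancel.
-/

/-- Apply a list of swaps (each along an edge, given as a pair of vertices)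
to a configuration `f : T ≃ V` assigning tokens to vertices. -/
noncomputable def applySwaps {V T : Type*} (f : T ≃ V) (s : List (V × V)) : T ≃ V :=
  letI := Classical.decEq V
  s.foldl (fun g e => g.trans (Equiv.swap e.1 e.2)) f

section SwapSequences

variable {V T : Type*}

theorem Equiv.trans_swap_eq_swap_symm_trans [DecidableEq T] [DecidableEq V] (g : T ≃ V)
    (v₁ v₂ : V) : g.trans (Equiv.swap v₁ v₂) = (Equiv.swap (g.symm v₁) (g.symm v₂)).trans g := by
  rw [← Equiv.trans_swap_trans_symm, Equiv.trans_assoc, Equiv.symm_trans_self, Equiv.trans_refl]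

theorem applySwaps_append (f : T ≃ V) (s t : List (V × V)) :
    applySwaps f (s ++ t) = applySwaps (applySwaps f s) t := by
  simp only [applySwaps, List.foldl_append]

theorem applySwaps_cons [DecidableEq V] (f : T ≃ V) (e : V × V) (s : List (V × V)) :
    applySwaps f (e :: s) = applySwaps (f.trans (Equiv.swap e.1 e.2)) s := by
  simp only [applySwaps, List.foldl_cons]
  congr
  exact Subsingleton.elim _ _

theorem applySwaps_trans (σ : Equiv.Perm T) (f : T ≃ V) (s : List (V × V)) :
    applySwaps (σ.trans f) s = σ.trans (applySwaps f s) := by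
  classical
  induction s generalizing f with
  | nil => rfl
  | cons e s ih => rw [applySwaps_cons, applySwaps_cons, Equiv.trans_assoc, ih]

theorem applySwaps_cons_of_swaps_tokens [DecidableEq T] (g : T ≃ V) (e : V × V)
    (s : List (V × V)) (t₁ t₂ : T)
    (h : (g.symm e.1 = t₁ ∧ g.symm e.2 = t₂) ∨ (g.symm e.1 = t₂ ∧ g.symm e.2 = t₁)) :
    applySwaps g (e :: s) = (Equiv.swap t₁ t₂).trans (applySwaps g s) := by
  classical
  have hswap : Equiv.swap (g.symm e.1) (g.symm e.2) = Equiv.swap t₁ t₂ := by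
    rcases h with ⟨h₁, h₂⟩ | ⟨h₁, h₂⟩
    · rw [h₁, h₂]
    · rw [h₁, h₂, Equiv.swap_comm]
  rw [applySwaps_cons, Equiv.trans_swap_eq_swap_symm_trans, hswap, applySwaps_trans]

end SwapSequences

/-- If in the swap sequence `a ++ [e1] ++ b ++ [e2] ++ c` the swaps `e1` and `e2`
both exchange the same two tokens `t1, t2` (at the moment they are performed),
then removing both of those swaps yields a shorter sequence with the same
final configuration. -/
theorem stmt1 {V T : Type*} (f : T ≃ V) (a b c : List (V × V)) (e1 e2 : V × V)
    (t1 t2 : T)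
    (h1 : ((applySwaps f a).symm e1.1 = t1 ∧ (applySwaps f a).symm e1.2 = t2) ∨
          ((applySwaps f a).symm e1.1 = t2 ∧ (applySwaps f a).symm e1.2 = t1))
    (h2 : ((applySwaps f (a ++ [e1] ++ b)).symm e2.1 = t1 ∧
           (applySwaps f (a ++ [e1] ++ b)).symm e2.2 = t2) ∨
          ((applySwaps f (a ++ [e1] ++ b)).symm e2.1 = t2 ∧
           (applySwaps f (a ++ [e1] ++ b)).symm e2.2 = t1)) :
    applySwaps f (a ++ b ++ c) = applySwaps f (a ++ [e1] ++ b ++ [e2] ++ c) ∧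
    (a ++ b ++ c).length < (a ++ [e1] ++ b ++ [e2] ++ c).length := by
  classical
  have first_swap : applySwaps f (a ++ [e1] ++ b)
      = (Equiv.swap t1 t2).trans (applySwaps f (a ++ b)) := by
    rw [List.append_assoc, applySwaps_append, List.singleton_append,
      applySwaps_cons_of_swaps_tokens _ _ _ _ _ h1, ← applySwaps_append]
  refine ⟨?_, by simp⟩
  calc applySwaps f (a ++ b ++ c)
      = (Equiv.swap t1 t2).trans ((Equiv.swap t1 t2).trans (applySwaps f (a ++ b ++ c))) := by
        rw [← Equiv.trans_assoc, Equiv.swap_swap, Equiv.refl_trans]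
    _ = applySwaps f (a ++ [e1] ++ b ++ [e2] ++ c) := by
        rw [List.append_assoc _ [e2], applySwaps_append (s := a ++ [e1] ++ b),
          List.singleton_append, applySwaps_cons_of_swaps_tokens _ _ _ _ _ h2, first_swap,
          applySwaps_trans, ← applySwaps_append]
end

section
/- In the cycle instance where p tokens each want to move q steps clockwise on a cycle of length pq, the quantity total(K) (sum of distances from start to target over all tokens) equals pq, and hence for every δ > 0 there exist p, q such that the optimal number of swaps exceeds (2 − δ)·total(K). -/
/-- The cycle graph on `ZMod n`: `v` adjacent to `v + 1`. -/
def cycleG (n : ℕ) : SimpleGraph (ZMod n) :=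
  SimpleGraph.fromRel (fun a b => b = a + 1)

/-- Minimum length of a swap sequence on `G` transforming `f1` into `f2`. -/
noncomputable def swOPT {V T : Type*} (G : SimpleGraph V) (f1 f2 : T ≃ V) : ℕ :=
  sInf {k | ∃ s : List (V × V),
    (∀ e ∈ s, G.Adj e.1 e.2) ∧ applySwaps f1 s = f2 ∧ s.length = k}

/-- `total(K)`: sum over tokens of the distance from start to target vertex,
for the instance on the cycle of length `n` with starting configuration the
identity and target configuration `π`. -/
noncomputable def totalCycle (n : ℕ) (π : Equiv.Perm (ZMod n)) : ℕ :=
  if h : n = 0 then 0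
  else
    letI : NeZero n := ⟨h⟩
    ∑ v : ZMod n, (cycleG n).dist v (π v)

/-- `π` is the permutation where, for each `0 ≤ i ≤ p-1`, the token starting on
`v_{iq}` has target `v_{(i+1)q mod pq}` and every other token is fixed. -/
def IsShiftPerm (p q : ℕ) (π : Equiv.Perm (ZMod (p * q))) : Prop :=
  (∀ i < p, π ((i * q : ℕ) : ZMod (p * q)) = (((i + 1) * q : ℕ) : ZMod (p * q))) ∧
  (∀ v : ZMod (p * q), (∀ i < p, v ≠ ((i * q : ℕ) : ZMod (p * q))) → π v = v)

open Finset SimpleGraph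

variable {n : ℕ}

lemma cycleG_adj_iff {a b : ZMod n} :
    (cycleG n).Adj a b ↔ a ≠ b ∧ (b = a + 1 ∨ a = b + 1) :=
  fromRel_adj _ a b

lemma cycleG_adj_add_one (hn : 2 ≤ n) (a : ZMod n) : (cycleG n).Adj a (a + 1) := by
  have : Fact (1 < n) := ⟨hn⟩
  exact cycleG_adj_iff.2 ⟨by simp, .inl rfl⟩

lemma exists_walk_add_natCast (hn : 2 ≤ n) (a : ZMod n) (k : ℕ) :
    ∃ w : (cycleG n).Walk a (a + k), w.length = k := by
  induction k with
  | zero => exact ⟨Walk.nil.copy rfl (by simp), by simp⟩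
  | succ k ih =>
    obtain ⟨w, hw⟩ := ih
    have h := cycleG_adj_add_one hn (a + k)
    rw [add_assoc, ← Nat.cast_add_one] at h
    exact ⟨w.concat h, by simp [hw]⟩

lemma exists_int_of_walk {a b : ZMod n} (w : (cycleG n).Walk a b) :
    ∃ s : ℤ, |s| ≤ w.length ∧ (s : ZMod n) = b - a := by
  induction w with
  | nil => exact ⟨0, by simp, by simp⟩
  | @cons a c b h w ih =>
    obtain ⟨s, hs, hsba⟩ := ih
    rcases (cycleG_adj_iff.1 h).2 with rfl | rfl
    · refine ⟨s + 1, ?_, by push_cast [hsba]; ring⟩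
      simp only [Walk.length_cons, Nat.cast_add_one]
      linarith [abs_add_le s 1, abs_one (α := ℤ)]
    · refine ⟨s - 1, ?_, by push_cast [hsba]; ring⟩
      simp only [Walk.length_cons, Nat.cast_add_one]
      linarith [abs_sub s 1, abs_one (α := ℤ)]

lemma cycleG_dist_add_natCast (hn : 2 ≤ n) {k : ℕ} (hk : 2 * k ≤ n) (a : ZMod n) :
    (cycleG n).dist a (a + k) = k := by
  obtain ⟨w, hw⟩ := exists_walk_add_natCast hn a k
  refine le_antisymm ((dist_le w).trans hw.le) ?_
  obtain ⟨w', hw'⟩ := Reachable.exists_walk_length_eq_dist ⟨w⟩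
  obtain ⟨s, hs, hsk⟩ := exists_int_of_walk w'
  rw [add_sub_cancel_left, ← Int.cast_natCast, ZMod.intCast_eq_intCast_iff_dvd_sub] at hsk
  rw [hw'] at hs
  by_contra! hlt
  rcases abs_le.1 hs with ⟨_, _⟩
  have := Int.le_of_dvd (by omega) hsk
  omega

lemma left_pos_of_neZero_mul (p q : ℕ) [NeZero (p * q)] : 0 < p :=
  Nat.pos_of_ne_zero (left_ne_zero_of_mul (NeZero.ne (p * q)))

lemma right_pos_of_neZero_mul (p q : ℕ) [NeZero (p * q)] : 0 < q :=
  Nat.pos_of_ne_zero (right_ne_zero_of_mul (NeZero.ne (p * q)))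

lemma sum_val_eq_sum_range [NeZero n] {M : Type*} [AddCommMonoid M] (f : ℕ → M) :
    ∑ t : ZMod n, f t.val = ∑ m ∈ range n, f m := by
  obtain ⟨k, rfl⟩ : ∃ k, n = k + 1 := Nat.exists_eq_succ_of_ne_zero (NeZero.ne n)
  exact Fin.sum_univ_eq_sum_range f (k + 1)

lemma card_filter_val [NeZero n] (P : ℕ → Prop) [DecidablePred P] :
    #{t : ZMod n | P t.val} = #{m ∈ range n | P m} := by
  rw [card_filter, card_filter]
  exact sum_val_eq_sum_range (fun m => if P m then 1 else 0)

lemma dvd_val_add_natCast_iff [NeZero n] {q m : ℕ} (hqn : q ∣ n) (hqm : q ∣ m) (t : ZMod n) :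
    q ∣ (t + m).val ↔ q ∣ t.val := by
  rw [ZMod.val_add, ZMod.val_natCast, Nat.dvd_mod_iff hqn,
    Nat.dvd_add_left ((Nat.dvd_mod_iff hqn).2 hqm)]

def shiftOf (q m : ℕ) : ℕ := if q ∣ m then q else 0

lemma dvd_shiftOf (q m : ℕ) : q ∣ shiftOf q m := by
  unfold shiftOf; split_ifs <;> simp

lemma shiftOf_le (q m : ℕ) : shiftOf q m ≤ q := by
  unfold shiftOf; split_ifs <;> simp

lemma shiftOf_congr {q a b : ℕ} (h : q ∣ a ↔ q ∣ b) : shiftOf q a = shiftOf q b := by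
  simp only [shiftOf, h]

lemma shiftOf_val_add_shiftOf [NeZero n] {q : ℕ} (hqn : q ∣ n) (t : ZMod n) :
    shiftOf q (t + shiftOf q t.val).val = shiftOf q t.val :=
  shiftOf_congr (dvd_val_add_natCast_iff hqn (dvd_shiftOf q _) t)

lemma shiftOf_val_sub_shiftOf [NeZero n] {q : ℕ} (hqn : q ∣ n) (t : ZMod n) :
    shiftOf q (t - shiftOf q t.val).val = shiftOf q t.val := by
  have h := dvd_val_add_natCast_iff hqn (dvd_shiftOf q t.val) (t - shiftOf q t.val)
  rw [sub_add_cancel] at h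
  exact shiftOf_congr h.symm

section shift

variable {p q : ℕ}

lemma val_natCast_mul (hq : 0 < q) {i : ℕ} (hi : i < p) :
    ((i * q : ℕ) : ZMod (p * q)).val = i * q :=
  ZMod.val_natCast_of_lt (Nat.mul_lt_mul_of_pos_right hi hq)

lemma exists_eq_natCast_mul_of_dvd_val (hp : 0 < p) (hq : 0 < q) {t : ZMod (p * q)}
    (h : q ∣ t.val) : ∃ i < p, t = ((i * q : ℕ) : ZMod (p * q)) := by
  have : NeZero (p * q) := ⟨by positivity⟩
  obtain ⟨i, hi⟩ := h
  refine ⟨i, ?_, ?_⟩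
  · have := t.val_lt
    rw [hi, mul_comm] at this
    exact lt_of_mul_lt_mul_right this (Nat.zero_le q)
  · rw [Nat.mul_comm i q, ← hi, ZMod.natCast_zmod_val]

lemma isShiftPerm_iff (hp : 0 < p) (hq : 0 < q) {π : Equiv.Perm (ZMod (p * q))} :
    IsShiftPerm p q π ↔ ∀ t, π t = t + shiftOf q t.val := by
  constructor
  · rintro ⟨hmove, hfix⟩ t
    by_cases h : q ∣ t.val
    · obtain ⟨i, hi, rfl⟩ := exists_eq_natCast_mul_of_dvd_val hp hq h
      rw [hmove i hi, shiftOf, if_pos h]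
      push_cast; ring
    · rw [shiftOf, if_neg h, Nat.cast_zero, add_zero]
      refine hfix t fun i hi hti => h ?_
      rw [hti, val_natCast_mul hq hi]
      exact dvd_mul_left q i
  · intro hπ
    refine ⟨fun i hi => ?_, fun t ht => ?_⟩
    · rw [hπ, val_natCast_mul hq hi, shiftOf, if_pos (dvd_mul_left q i)]
      push_cast; ring
    · have h : ¬ q ∣ t.val := fun h => by
        obtain ⟨i, hi, rfl⟩ := exists_eq_natCast_mul_of_dvd_val hp hq h
        exact ht i hi rfl
      rw [hπ, shiftOf, if_neg h, Nat.cast_zero, add_zero]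

lemma exists_isShiftPerm (hp : 0 < p) (hq : 0 < q) : ∃ π, IsShiftPerm p q π := by
  have : NeZero (p * q) := ⟨by positivity⟩
  have hqn : q ∣ p * q := dvd_mul_left q p
  let π : Equiv.Perm (ZMod (p * q)) :=
    { toFun t := t + shiftOf q t.val
      invFun t := t - shiftOf q t.val
      left_inv t := by simp only [shiftOf_val_add_shiftOf hqn, add_sub_cancel_right]
      right_inv t := by simp only [shiftOf_val_sub_shiftOf hqn, sub_add_cancel] }
  exact ⟨π, (isShiftPerm_iff hp hq).2 fun t => rfl⟩

lemma card_filter_dvd_range_mul (hq : 0 < q) : #{m ∈ range (p * q) | q ∣ m} = p := by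
  have : {m ∈ range (p * q) | q ∣ m} =
      (range p).map ⟨(· * q), mul_left_injective₀ hq.ne'⟩ := by
    ext m
    simp only [mem_filter, mem_range, mem_map, Function.Embedding.coeFn_mk]
    constructor
    · rintro ⟨hm, i, rfl⟩
      exact ⟨i, by nlinarith, mul_comm i q⟩
    · rintro ⟨i, hi, rfl⟩
      exact ⟨Nat.mul_lt_mul_of_pos_right hi hq, dvd_mul_left q i⟩
  rw [this, card_map, card_range]

lemma sum_ite_dvd_val [NeZero (p * q)] {M : Type*} [AddCommMonoid M] (c : M) :
    ∑ t : ZMod (p * q), (if q ∣ t.val then c else 0) = p • c := by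
  have hq := right_pos_of_neZero_mul p q
  rw [sum_val_eq_sum_range (fun m => if q ∣ m then c else 0), ← sum_filter, sum_const,
    card_filter_dvd_range_mul hq]

lemma IsShiftPerm.totalCycle_eq (hp : 2 ≤ p) (hq : 0 < q) {π : Equiv.Perm (ZMod (p * q))}
    (hπ : IsShiftPerm p q π) : totalCycle (p * q) π = p * q := by
  have hpq : 2 ≤ p * q := by nlinarith
  have : NeZero (p * q) := ⟨by omega⟩
  rw [totalCycle, dif_neg (by omega)]
  calc ∑ t : ZMod (p * q), (cycleG (p * q)).dist t (π t)
      = ∑ t : ZMod (p * q), shiftOf q t.val := by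
        refine sum_congr rfl fun t _ => ?_
        rw [(isShiftPerm_iff (by omega) hq).1 hπ,
          cycleG_dist_add_natCast hpq (by nlinarith [shiftOf_le q t.val])]
    _ = p * q := by
        simp only [shiftOf]
        rw [sum_ite_dvd_val, smul_eq_mul]

end shift

lemma applySwaps_append_singleton {V T : Type*} [DecidableEq V] (f : T ≃ V)
    (s : List (V × V)) (e : V × V) :
    applySwaps f (s ++ [e]) = (applySwaps f s).trans (Equiv.swap e.1 e.2) := by
  simp only [applySwaps, List.foldl_append, List.foldl_cons, List.foldl_nil]
  congr!

lemma closure_swap_add_one_eq_top (hn : 2 ≤ n) :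
    Subgroup.closure (Set.range fun a : ZMod n => Equiv.swap a (a + 1)) = ⊤ := by
  have : NeZero n := ⟨by omega⟩
  set S := Set.range fun a : ZMod n => Equiv.swap a (a + 1)
  have hS : ∀ τ ∈ S, τ.IsSwap := by
    rintro _ ⟨a, rfl⟩
    exact ⟨a, a + 1, (cycleG_adj_add_one hn a).ne, rfl⟩
  have hreach (a : ZMod n) (k : ℕ) : ∃ g ∈ Subgroup.closure S, g a = a + k := by
    induction k with
    | zero => exact ⟨1, one_mem _, by simp⟩
    | succ k ih =>
      obtain ⟨g, hg, hga⟩ := ih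
      refine ⟨Equiv.swap (a + k) (a + k + 1) * g,
        mul_mem (Subgroup.subset_closure ⟨a + k, rfl⟩) hg, ?_⟩
      rw [Equiv.Perm.mul_apply, hga, Equiv.swap_apply_left]
      push_cast; ring
  have : MulAction.IsPretransitive (Subgroup.closure S) (ZMod n) := ⟨fun a b => by
    obtain ⟨g, hg, hgb⟩ := hreach a (b - a).val
    exact ⟨⟨g, hg⟩, by rw [Subgroup.smul_def, Equiv.Perm.smul_def, hgb, ZMod.natCast_zmod_val,
      add_sub_cancel]⟩⟩
  exact closure_of_isSwap_of_isPretransitive hS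

lemma exists_adjacent_swaps (hn : 2 ≤ n) (σ : Equiv.Perm (ZMod n)) :
    ∃ s : List (ZMod n × ZMod n), (∀ e ∈ s, (cycleG n).Adj e.1 e.2) ∧
      applySwaps (Equiv.refl _) s = σ := by
  have hswap (a : ZMod n) (y : Equiv.Perm (ZMod n))
      (hy : ∃ s : List (ZMod n × ZMod n), (∀ e ∈ s, (cycleG n).Adj e.1 e.2) ∧
        applySwaps (Equiv.refl _) s = y) :
      ∃ s : List (ZMod n × ZMod n), (∀ e ∈ s, (cycleG n).Adj e.1 e.2) ∧
        applySwaps (Equiv.refl _) s = Equiv.swap a (a + 1) * y := by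
    obtain ⟨s, hs, rfl⟩ := hy
    refine ⟨s ++ [(a, a + 1)], fun e he => ?_, applySwaps_append_singleton _ _ _⟩
    rcases List.mem_append.1 he with he | he
    · exact hs e he
    · rw [List.mem_singleton.1 he]
      exact cycleG_adj_add_one hn a
  have hσ := closure_swap_add_one_eq_top hn ▸ Subgroup.mem_top σ
  induction hσ using Subgroup.closure_induction_left with
  | one => exact ⟨[], by simp, rfl⟩
  | mul_left x hx y _ ih =>
    obtain ⟨a, rfl⟩ := hx
    exact hswap a y ih
  | inv_mul_cancel x hx y _ ih =>
    obtain ⟨a, rfl⟩ := hx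
    rw [Equiv.swap_inv]
    exact hswap a y ih

lemma Int.ediv_eq_ediv_of_abs_sub_le_one {n y y' : ℤ} (hn : 0 < n) (hy : ¬ n ∣ y)
    (hy' : ¬ n ∣ y') (h : |y - y'| ≤ 1) : y / n = y' / n := by
  obtain ⟨hlo, hhi⟩ := (Int.ediv_eq_iff_of_pos hn).1 (rfl : y / n = y / n)
  rw [eq_comm, Int.ediv_eq_iff_of_pos hn]
  have h1 : y ≠ y / n * n := fun h => hy (Dvd.intro_left _ h.symm)
  have h2 : y' ≠ y / n * n := fun h => hy' (Dvd.intro_left _ h.symm)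
  have h3 : y' ≠ y / n * n + n := fun h => hy' (Dvd.intro_left (y / n + 1) (by rw [h]; ring))
  generalize y / n * n = m at *
  rcases abs_le.1 h with ⟨_, _⟩
  omega

lemma Int.abs_ediv_sub_ediv_le_one {n y y' : ℤ} (hn : 0 < n) (h : |y - y'| ≤ n) :
    |y / n - y' / n| ≤ 1 := by
  rcases abs_le.1 h with ⟨h1, h2⟩
  have e (m : ℤ) : (m + n) / n = m / n + 1 := by
    simpa using Int.add_mul_ediv_right m 1 hn.ne'
  have k1 : y / n ≤ y' / n + 1 := e y' ▸ Int.ediv_le_ediv hn (by linarith)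
  have k2 : y' / n ≤ y / n + 1 := e y ▸ Int.ediv_le_ediv hn (by linarith)
  exact abs_le.2 ⟨by linarith, by linarith⟩

section winding

variable {T : Type*}

def IsLift (g : T ≃ ZMod n) (x : T → ℤ) : Prop := ∀ t, (x t : ZMod n) = g t

lemma IsLift.not_dvd_sub {g : T ≃ ZMod n} {x : T → ℤ} (hx : IsLift g x) {a b : T}
    (hab : a ≠ b) : ¬ (n : ℤ) ∣ x a - x b := by
  rw [← ZMod.intCast_zmod_eq_zero_iff_dvd, Int.cast_sub, hx a, hx b, sub_eq_zero]
  exact g.injective.ne hab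

variable [Fintype T]

def windingDist (n : ℤ) (x y : T → ℤ) : ℤ :=
  ∑ p : T × T, |(x p.1 - x p.2) / n - (y p.1 - y p.2) / n|

lemma windingDist_self (n : ℤ) (x : T → ℤ) : windingDist n x x = 0 := by
  simp [windingDist]

lemma windingDist_le_add (n : ℤ) (x y w : T → ℤ) :
    windingDist n x w ≤ windingDist n x y + windingDist n y w := by
  rw [windingDist, windingDist, windingDist, ← sum_add_distrib]
  exact sum_le_sum fun p _ => abs_sub_le _ _ _

variable [DecidableEq T]

lemma windingDist_le_two (hn : 2 ≤ n) {x x' : T → ℤ} {g g' : T ≃ ZMod n} (hx : IsLift g x)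
    (hx' : IsLift g' x') {a b : T} (hab : a ≠ b) {δ : ℤ} (hδ : |δ| = 1)
    (hmove : ∀ t, x' t = x t + (if t = a then δ else 0) - (if t = b then δ else 0)) :
    windingDist n x x' ≤ 2 := by
  have hn0 : (0 : ℤ) < n := by omega
  have hδ' : δ = 1 ∨ δ = -1 := abs_eq (zero_le_one' ℤ) |>.1 hδ
  have hpair (u v : T) : |(x u - x v) / n - (x' u - x' v) / n| ≤ 1 :=
    Int.abs_ediv_sub_ediv_le_one hn0 (by
      rw [hmove, hmove, abs_le]
      split_ifs <;> constructor <;> omega)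
  rw [windingDist, Fintype.sum_eq_add (a, b) (b, a) (by simp [hab])]
  · linarith [hpair a b, hpair b a]
  rintro ⟨u, v⟩ ⟨h1, h2⟩
  rcases eq_or_ne u v with rfl | huv
  · simp
  rw [abs_eq_zero, sub_eq_zero]
  refine Int.ediv_eq_ediv_of_abs_sub_le_one hn0 (hx.not_dvd_sub huv) (hx'.not_dvd_sub huv) ?_
  rw [hmove, hmove, abs_le]
  simp only [ne_eq, Prod.mk.injEq] at h1 h2
  split_ifs <;> simp_all <;> omega

lemma IsLift.exists_swap (hn : 2 ≤ n) {g : T ≃ ZMod n} {x : T → ℤ} (hx : IsLift g x)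
    {e : ZMod n × ZMod n} (he : (cycleG n).Adj e.1 e.2) :
    ∃ x', IsLift (g.trans (Equiv.swap e.1 e.2)) x' ∧ ∑ t, x' t = ∑ t, x t ∧
      windingDist n x x' ≤ 2 := by
  obtain ⟨hne, hdir⟩ := cycleG_adj_iff.1 he
  obtain ⟨δ, hδ, hδe⟩ : ∃ δ : ℤ, |δ| = 1 ∧ (δ : ZMod n) = e.2 - e.1 := by
    rcases hdir with h | h
    · exact ⟨1, abs_one, by rw [h]; push_cast; ring⟩
    · exact ⟨-1, by simp, by rw [h]; push_cast; ring⟩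
  set a := g.symm e.1
  set b := g.symm e.2
  have hab : a ≠ b := g.symm.injective.ne hne
  have hga : g a = e.1 := g.apply_symm_apply _
  have hgb : g b = e.2 := g.apply_symm_apply _
  let x' t := x t + (if t = a then δ else 0) - (if t = b then δ else 0)
  have hx' : IsLift (g.trans (Equiv.swap e.1 e.2)) x' := by
    intro t
    simp only [x', Equiv.trans_apply]
    by_cases hta : t = a
    · subst hta
      simp [hx _, hab, hδe, hga]
    by_cases htb : t = b
    · subst htb
      simp [hx _, hδe, hgb, hta]
    rw [if_neg hta, if_neg htb, Equiv.swap_apply_of_ne_of_ne, add_zero, sub_zero, hx t]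
    · exact fun h => hta (g.symm_apply_eq.2 h.symm).symm
    · exact fun h => htb (g.symm_apply_eq.2 h.symm).symm
  refine ⟨x', hx', ?_, windingDist_le_two hn hx hx' hab hδ fun t => rfl⟩
  simp [x', sum_add_distrib, sum_sub_distrib]

lemma IsLift.exists_applySwaps (hn : 2 ≤ n) {g : T ≃ ZMod n} {x : T → ℤ} (hx : IsLift g x)
    (s : List (ZMod n × ZMod n)) (hs : ∀ e ∈ s, (cycleG n).Adj e.1 e.2) :
    ∃ x', IsLift (applySwaps g s) x' ∧ ∑ t, x' t = ∑ t, x t ∧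
      windingDist n x x' ≤ 2 * s.length := by
  induction s using List.reverseRecOn with
  | nil => exact ⟨x, hx, rfl, by simp [windingDist_self]⟩
  | append_singleton s e ih =>
    obtain ⟨x₁, hx₁, hsum₁, hw₁⟩ := ih fun e he => hs e (List.mem_append_left _ he)
    obtain ⟨x₂, hx₂, hsum₂, hw₂⟩ := hx₁.exists_swap hn (hs e (by simp))
    refine ⟨x₂, applySwaps_append_singleton g s e ▸ hx₂, hsum₂.trans hsum₁, ?_⟩
    have := windingDist_le_add n x x₁ x₂
    push_cast [List.length_append, List.length_singleton]
    linarith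

end winding

lemma Int.ediv_eq_ite {n u : ℤ} (h1 : -n ≤ u) (h2 : u < n) :
    u / n = if u < 0 then -1 else 0 := by
  split_ifs <;> rw [Int.ediv_eq_iff_of_pos (by omega)] <;> omega

lemma Nat.add_le_of_dvd_of_lt {q a n : ℕ} (hqn : q ∣ n) (hqa : q ∣ a) (ha : a < n) :
    a + q ≤ n := by
  have := Nat.le_of_dvd (by omega) (Nat.dvd_sub hqn hqa)
  omega

lemma Nat.not_dvd_of_lt_of_lt_add {q a b : ℕ} (hqa : q ∣ a) (hab : a < b) (hba : b < a + q) :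
    ¬ q ∣ b := fun hqb => by
  have := Nat.le_of_dvd (by omega) (Nat.dvd_sub hqb hqa)
  omega

/-- `b` is one of the `q - 1` vertices jumped over by the token starting at the multiple `a`
of `q`. -/
def InWindow (q a b : ℕ) : Prop := q ∣ a ∧ a < b ∧ b < a + q

instance (q a b : ℕ) : Decidable (InWindow q a b) :=
  inferInstanceAs (Decidable (q ∣ a ∧ a < b ∧ b < a + q))

/-- `χ(a, b)`: how much the winding number of the tokens starting at `a` and `b` changes when each
token at `m` moves on by `shiftOf q m`. -/
def crossing (n q a b : ℕ) : ℤ :=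
  ((a : ℤ) - b + shiftOf q a - shiftOf q b) / n - ((a : ℤ) - b) / n

lemma crossing_eq {n q a b : ℕ} (hqn : q ∣ n) (ha : a < n) (hb : b < n) :
    crossing n q a b = if InWindow q a b then 1 else if InWindow q b a then -1 else 0 := by
  have hsub : ((a : ℤ) - b) / n = if (a : ℤ) - b < 0 then -1 else 0 :=
    Int.ediv_eq_ite (by omega) (by omega)
  rw [crossing, hsub]
  by_cases hqa : q ∣ a <;> by_cases hqb : q ∣ b <;> simp only [InWindow, shiftOf, hqa, hqb,
    if_true, if_false, true_and, false_and, Nat.cast_zero]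
  · have h1 := Nat.not_dvd_of_lt_of_lt_add (q := q) (a := a) (b := b) hqa
    have h2 := Nat.not_dvd_of_lt_of_lt_add (q := q) (a := b) (b := a) hqb
    rw [show (a : ℤ) - b + q - q = a - b by ring, hsub]
    split_ifs <;> simp_all
  · have hb0 : b ≠ 0 := by rintro rfl; exact hqb (dvd_zero q)
    have hbq : b ≠ a + q := by rintro rfl; exact hqb (Nat.dvd_add hqa dvd_rfl)
    have := Nat.add_le_of_dvd_of_lt hqn hqa ha
    rw [Int.ediv_eq_ite (by omega) (by omega)]
    split_ifs <;> omega
  · have ha0 : a ≠ 0 := by rintro rfl; exact hqa (dvd_zero q)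
    have haq : a ≠ b + q := by rintro rfl; exact hqa (Nat.dvd_add hqb dvd_rfl)
    have hab : a ≠ b := by rintro rfl; exact hqa hqb
    have := Nat.add_le_of_dvd_of_lt hqn hqb hb
    rw [Int.ediv_eq_ite (by omega) (by omega)]
    split_ifs <;> omega
  · rw [show (a : ℤ) - b + 0 - 0 = a - b by ring, hsub]
    split_ifs <;> simp_all

lemma crossing_ne_zero_iff {n q a b : ℕ} (hqn : q ∣ n) (ha : a < n) (hb : b < n) :
    crossing n q a b ≠ 0 ↔ InWindow q a b ∨ InWindow q b a := by
  rw [crossing_eq hqn ha hb]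
  split_ifs <;> simp_all

section pairs

variable {α : Type*} [Fintype α]

lemma card_filter_prod (R : α → α → Prop) [DecidableRel R] :
    #{p : α × α | R p.1 p.2} = ∑ a, #{b | R a b} := by
  rw [card_filter, Fintype.sum_prod_type]
  simp only [card_filter]

lemma card_mul_sub_le_card_ne (z : α → ℤ) {S : ℕ} (hS : ∀ c, #{t | z t = c} ≤ S) :
    (Fintype.card α : ℤ) * (Fintype.card α - S) ≤ #{p : α × α | z p.1 ≠ z p.2} := by
  rw [card_filter, Fintype.sum_prod_type, ← card_univ, ← nsmul_eq_mul, ← sum_const,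
    Nat.cast_sum]
  refine sum_le_sum fun a _ => ?_
  have h1 := card_filter_add_card_filter_not (s := univ) (fun b => z b = z a)
  have h2 := hS (z a)
  rw [← card_filter]
  simp only [ne_eq, eq_comm (a := z a)] at h1 ⊢
  omega

lemma card_add_card_sub_le_sum_abs (z : α → ℤ) (χ : α → α → ℤ) :
    (#{p : α × α | z p.1 ≠ z p.2} : ℤ) + #{p : α × α | χ p.1 p.2 ≠ 0}
        - 2 * #{p : α × α | z p.1 ≠ z p.2 ∧ χ p.1 p.2 ≠ 0}
      ≤ ∑ p : α × α, |z p.1 - z p.2 + χ p.1 p.2| := by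
  simp only [card_eq_sum_ones, sum_filter, Nat.cast_sum, mul_sum, ← sum_add_distrib,
    ← sum_sub_distrib]
  refine sum_le_sum fun p _ => ?_
  by_cases h1 : z p.1 = z p.2 <;> by_cases h2 : χ p.1 p.2 = 0 <;>
    simp [h1, h2, Int.one_le_abs, sub_eq_zero]

variable [DecidableEq α]

lemma card_filter_fst_mem_le (R : α → α → Prop) [DecidableRel R] (O : Finset α) {D : ℕ}
    (hD : ∀ a, #{b | R a b} ≤ D) : #{p : α × α | p.1 ∈ O ∧ R p.1 p.2} ≤ #O * D := by
  calc #{p : α × α | p.1 ∈ O ∧ R p.1 p.2}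
      = ∑ a ∈ O, #{b | R a b} := by
        have : ({p : α × α | p.1 ∈ O ∧ R p.1 p.2} : Finset _) =
            {p ∈ O ×ˢ (univ : Finset α) | R p.1 p.2} := by
          ext; simp
        rw [this, card_filter, sum_product]
        simp only [card_filter]
    _ ≤ #O * D := by
        simpa using sum_le_sum fun a (_ : a ∈ O) => hD a

lemma two_mul_card_mul_le_card_ne (z : α → ℤ) (c : ℤ) :
    2 * #{t | z t ≠ c} * (Fintype.card α - #{t | z t ≠ c}) ≤
      #{p : α × α | z p.1 ≠ z p.2} := by
  set O : Finset α := {t | z t ≠ c}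
  have hsub : O ×ˢ Oᶜ ∪ Oᶜ ×ˢ O ⊆ ({p | z p.1 ≠ z p.2} : Finset (α × α)) := by
    rintro ⟨a, b⟩ h
    simp only [O, mem_union, mem_product, mem_compl, mem_filter, mem_univ, true_and,
      not_not] at h ⊢
    rcases h with ⟨ha, rfl⟩ | ⟨rfl, hb⟩ <;> tauto
  have hdisj : Disjoint (O ×ˢ Oᶜ) (Oᶜ ×ˢ O) :=
    disjoint_product.2 (.inl disjoint_compl_right)
  have := card_le_card hsub
  rw [card_union_of_disjoint hdisj, card_product, card_product, card_compl] at this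
  linarith

lemma card_ne_and_ne_zero_le (z : α → ℤ) (χ : α → α → ℤ) (c : ℤ) {D : ℕ}
    (hχ : ∀ a b, χ a b ≠ 0 → χ b a ≠ 0) (hD : ∀ a, #{b | χ a b ≠ 0} ≤ D) :
    #{p : α × α | z p.1 ≠ z p.2 ∧ χ p.1 p.2 ≠ 0} ≤ 2 * #{t | z t ≠ c} * D := by
  set A : Finset (α × α) := {p | p.1 ∈ ({t | z t ≠ c} : Finset α) ∧ χ p.1 p.2 ≠ 0}
  have hsub : ({p : α × α | z p.1 ≠ z p.2 ∧ χ p.1 p.2 ≠ 0} : Finset (α × α)) ⊆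
      A ∪ A.map (Equiv.prodComm α α).toEmbedding := by
    rintro ⟨a, b⟩ h
    simp only [A, mem_union, mem_map_equiv, mem_filter, mem_univ, true_and,
      Equiv.prodComm_symm, Equiv.prodComm_apply, Prod.swap_prod_mk] at h ⊢
    by_cases ha : z a = c
    · exact .inr ⟨fun hb => h.1 (ha.trans hb.symm), hχ a b h.2⟩
    · exact .inl ⟨ha, h.2⟩
  calc _ ≤ #A + #A := (card_le_card hsub).trans ((card_union_le _ _).trans (by rw [card_map]))
    _ ≤ 2 * #{t | z t ≠ c} * D := by
        have := card_filter_fst_mem_le (fun a b => χ a b ≠ 0) {t | z t ≠ c} hD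
        linarith

/-- A pair contributes at least `1` unless `z` separates it and `χ ≠ 0` there. If all but
`k ≤ N - 2D - 1` points share a value `c` of `z`, then `z` separates at least `2k(N - k)` pairs,
at most `2kD` of which have `χ ≠ 0`; otherwise every level set of `z` has at most `2D` points. -/
theorem le_sum_abs_sub_add (z : α → ℤ) (χ : α → α → ℤ) {D : ℕ}
    (hz : ∀ c, ∃ t, z t ≠ c) (hχ : ∀ a b, χ a b ≠ 0 → χ b a ≠ 0)
    (hD : ∀ a, #{b | χ a b ≠ 0} ≤ D) :
    min (2 * ((Fintype.card α : ℤ) - 2 * D - 1) + #{p : α × α | χ p.1 p.2 ≠ 0})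
        (Fintype.card α * ((Fintype.card α : ℤ) - 2 * D) - #{p : α × α | χ p.1 p.2 ≠ 0})
      ≤ ∑ p : α × α, |z p.1 - z p.2 + χ p.1 p.2| := by
  have hbase := card_add_card_sub_le_sum_abs z χ
  by_cases h : ∃ c, #{t | z t ≠ c} + 2 * D + 1 ≤ Fintype.card α
  · obtain ⟨c, hc⟩ := h
    have hk : 1 ≤ #{t | z t ≠ c} := by
      obtain ⟨t, ht⟩ := hz c
      exact card_pos.2 ⟨t, by simpa using ht⟩
    have h1 := two_mul_card_mul_le_card_ne z c
    have h2 := card_ne_and_ne_zero_le z χ c hχ hD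
    refine min_le_of_left_le ?_
    zify [(by omega : #{t | z t ≠ c} ≤ Fintype.card α)] at h1 h2 hc hk
    nlinarith [mul_nonneg (sub_nonneg.2 hk) (sub_nonneg.2 hc)]
  · have hS (c : ℤ) : #{t | z t = c} ≤ 2 * D := by
      have := card_filter_add_card_filter_not (s := univ) (fun t => z t = c)
      simp only [card_univ, ← ne_eq] at this
      push Not at h
      have := h c
      omega
    have h1 := card_mul_sub_le_card_ne z hS
    have h2 : #{p : α × α | z p.1 ≠ z p.2 ∧ χ p.1 p.2 ≠ 0} ≤
        #{p : α × α | χ p.1 p.2 ≠ 0} :=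
      card_le_card (monotone_filter_right _ fun _ _ h => h.2)
    refine min_le_of_right_le ?_
    push_cast at h1
    zify at h2
    linarith

end pairs

section window

variable {p q : ℕ} [NeZero (p * q)]

lemma card_inWindow {a : ℕ} (ha : a < p * q) :
    #{b : ZMod (p * q) | InWindow q a b.val} = if q ∣ a then q - 1 else 0 := by
  rw [card_filter_val]
  split_ifs with hqa
  · have := Nat.add_le_of_dvd_of_lt (dvd_mul_left q p) hqa ha
    rw [show {m ∈ range (p * q) | InWindow q a m} = Ioo a (a + q) by
      ext m; simp only [InWindow, mem_filter, mem_range, mem_Ioo, hqa, true_and]; omega]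
    simp
  · simp [InWindow, hqa]

lemma card_inWindow_pairs :
    #{e : ZMod (p * q) × ZMod (p * q) | InWindow q e.1.val e.2.val ∨ InWindow q e.2.val e.1.val}
      = 2 * p * (q - 1) := by
  have hdisj : Disjoint
      ({e | InWindow q e.1.val e.2.val} : Finset (ZMod (p * q) × ZMod (p * q)))
      ({e | InWindow q e.2.val e.1.val} : Finset (ZMod (p * q) × ZMod (p * q))) :=
    disjoint_filter.2 fun e _ h h' => by unfold InWindow at h h'; omega
  have hswap : #{e : ZMod (p * q) × ZMod (p * q) | InWindow q e.2.val e.1.val}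
      = #{e : ZMod (p * q) × ZMod (p * q) | InWindow q e.1.val e.2.val} := by
    rw [card_filter_prod (fun a b : ZMod (p * q) => InWindow q b.val a.val),
      card_filter_prod (fun a b : ZMod (p * q) => InWindow q a.val b.val)]
    simp only [card_filter]
    exact sum_comm
  rw [filter_or, card_union_of_disjoint hdisj, hswap,
    card_filter_prod (fun a b : ZMod (p * q) => InWindow q a.val b.val)]
  simp only [card_inWindow (ZMod.val_lt _)]
  rw [sum_ite_dvd_val, smul_eq_mul]
  ring

lemma card_inWindow_partners_le (a : ZMod (p * q)) :
    #{b : ZMod (p * q) | InWindow q a.val b.val ∨ InWindow q b.val a.val} ≤ q - 1 := by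
  rw [filter_or]
  refine (card_union_le _ _).trans ?_
  rw [card_inWindow a.val_lt]
  split_ifs with hqa
  · have : ({b | InWindow q b.val a.val} : Finset (ZMod (p * q))) = ∅ :=
      filter_false_of_mem fun b _ h => Nat.not_dvd_of_lt_of_lt_add h.1 h.2.1 h.2.2 hqa
    simp [this]
  · have hq : 2 ≤ q := by
      have := right_pos_of_neZero_mul p q
      have : q ≠ 1 := by rintro rfl; exact hqa (one_dvd _)
      omega
    have : #({b | InWindow q b.val a.val} : Finset (ZMod (p * q))) ≤ 1 := by
      refine card_le_one.2 fun b hb b' hb' => ZMod.val_injective _ ?_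
      obtain ⟨hqb, hba, hab⟩ := (mem_filter.1 hb).2
      obtain ⟨hqb', hba', hab'⟩ := (mem_filter.1 hb').2
      by_contra hne
      rcases Nat.lt_or_gt_of_ne hne with h | h
      · exact Nat.not_dvd_of_lt_of_lt_add hqb h (by omega) hqb'
      · exact Nat.not_dvd_of_lt_of_lt_add hqb' h (by omega) hqb
    omega

end window

section lowerBound

variable {p q : ℕ} [NeZero (p * q)]

lemma le_sum_abs_sub_add_crossing (hp : 3 ≤ p) (z : ZMod (p * q) → ℤ) (hz : ∑ t, z t = -1) :
    2 * (2 * p * q - p - 2 * q + 1 : ℤ) ≤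
      ∑ e : ZMod (p * q) × ZMod (p * q),
        |z e.1 - z e.2 + crossing (p * q) q e.1.val e.2.val| := by
  have hq := right_pos_of_neZero_mul p q
  have hcross (a b : ZMod (p * q)) :=
    crossing_ne_zero_iff (dvd_mul_left q p) a.val_lt b.val_lt
  have hnonconst (c : ℤ) : ∃ t, z t ≠ c := by
    by_contra! h
    simp only [h, sum_const, card_univ, ZMod.card, nsmul_eq_mul] at hz
    rcases Int.eq_one_or_neg_one_of_mul_eq_neg_one hz with h1 | h1 <;> push_cast at h1 <;> nlinarith
  have key := le_sum_abs_sub_add z (fun a b => crossing (p * q) q a.val b.val) (D := q - 1)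
    hnonconst (fun a b h => (hcross b a).2 ((hcross a b).1 h).symm)
    (fun a => by rw [filter_congr fun b _ => hcross a b]; exact card_inWindow_partners_le a)
  rw [filter_congr fun e _ => hcross e.1 e.2, card_inWindow_pairs, ZMod.card] at key
  have hp' : (3 : ℤ) ≤ p := by exact_mod_cast hp
  refine le_trans (le_min ?_ ?_) key <;> push_cast [Nat.cast_sub hq]
  · linarith
  · nlinarith [mul_nonneg (by positivity : (0 : ℤ) ≤ p) (sq_nonneg ((q : ℤ) - 2)),
      mul_nonneg (by positivity : (0 : ℤ) ≤ p * q ^ 2) (sub_nonneg.2 hp')]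

lemma IsShiftPerm.exists_windingDist_eq {π : Equiv.Perm (ZMod (p * q))} (hπ : IsShiftPerm p q π)
    {x : ZMod (p * q) → ℤ} (hx : IsLift π x)
    (hsum : ∑ t, x t = ∑ t : ZMod (p * q), (t.val : ℤ)) :
    ∃ z : ZMod (p * q) → ℤ, ∑ t, z t = -1 ∧
      windingDist (p * q : ℕ) (fun t => (t.val : ℤ)) x =
        ∑ e : ZMod (p * q) × ZMod (p * q),
          |z e.1 - z e.2 + crossing (p * q) q e.1.val e.2.val| := by
  have hp := left_pos_of_neZero_mul p q
  have hq := right_pos_of_neZero_mul p q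
  have hdvd (t : ZMod (p * q)) : ((p * q : ℕ) : ℤ) ∣ x t - t.val - shiftOf q t.val := by
    rw [← ZMod.intCast_zmod_eq_zero_iff_dvd]
    push_cast
    rw [hx t, (isShiftPerm_iff hp hq).1 hπ t, ZMod.natCast_zmod_val]
    ring
  choose z hz using hdvd
  refine ⟨z, ?_, ?_⟩
  · have hshift : ∑ t : ZMod (p * q), (shiftOf q t.val : ℤ) = ((p * q : ℕ) : ℤ) := by
      simp only [shiftOf, Nat.cast_ite, Nat.cast_zero]
      rw [sum_ite_dvd_val, nsmul_eq_mul]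
      push_cast; ring
    have := sum_congr rfl fun t (_ : t ∈ univ) => hz t
    rw [sum_sub_distrib, sum_sub_distrib, hsum, hshift, ← mul_sum] at this
    have hn : ((p * q : ℕ) : ℤ) ≠ 0 := by exact_mod_cast NeZero.ne (p * q)
    exact mul_left_cancel₀ hn (by linarith)
  · refine sum_congr rfl fun e _ => ?_
    have hdiff : x e.1 - x e.2 = ((e.1.val : ℤ) - e.2.val + shiftOf q e.1.val - shiftOf q e.2.val)
        + (z e.1 - z e.2) * (p * q : ℕ) := by
      linear_combination hz e.1 - hz e.2
    rw [hdiff, Int.add_mul_ediv_right _ _ (by exact_mod_cast NeZero.ne (p * q)), crossing,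
      ← abs_neg]
    ring_nf

theorem IsShiftPerm.le_length (hp : 3 ≤ p) {π : Equiv.Perm (ZMod (p * q))}
    (hπ : IsShiftPerm p q π) {s : List (ZMod (p * q) × ZMod (p * q))}
    (hadj : ∀ e ∈ s, (cycleG (p * q)).Adj e.1 e.2) (hs : applySwaps (Equiv.refl _) s = π) :
    (2 * p * q - p - 2 * q + 1 : ℤ) ≤ s.length := by
  have hq := right_pos_of_neZero_mul p q
  have hx₀ : IsLift (Equiv.refl (ZMod (p * q))) fun t => (t.val : ℤ) := fun t => by simp
  obtain ⟨x, hx, hsum, hwind⟩ := hx₀.exists_applySwaps (by nlinarith) s hadj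
  rw [hs] at hx
  obtain ⟨z, hz, heq⟩ := hπ.exists_windingDist_eq hx hsum
  have := le_sum_abs_sub_add_crossing hp z hz
  linarith

theorem IsShiftPerm.le_swOPT (hp : 3 ≤ p) {π : Equiv.Perm (ZMod (p * q))}
    (hπ : IsShiftPerm p q π) :
    (2 * p * q - p - 2 * q + 1 : ℤ) ≤ swOPT (cycleG (p * q)) (Equiv.refl _) π := by
  have hq := right_pos_of_neZero_mul p q
  obtain ⟨s, hadj, hs⟩ := exists_adjacent_swaps (by nlinarith) π
  rw [swOPT]
  obtain ⟨s', hadj', hs', hlen⟩ := Nat.sInf_mem (⟨s.length, s, hadj, hs, rfl⟩ :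
    {k | ∃ s : List (ZMod (p * q) × ZMod (p * q)),
      (∀ e ∈ s, (cycleG (p * q)).Adj e.1 e.2) ∧ applySwaps (Equiv.refl _) s = π ∧
        s.length = k}.Nonempty)
  rw [← hlen]
  exact hπ.le_length hp hadj' hs'

end lowerBound

theorem stmt3 :
    (∀ p q : ℕ, 2 ≤ p → 1 ≤ q → ∀ π : Equiv.Perm (ZMod (p * q)),
        IsShiftPerm p q π → totalCycle (p * q) π = p * q) ∧
    (∀ δ : ℝ, 0 < δ → ∃ p q : ℕ, 2 ≤ p ∧ 1 ≤ q ∧ ∃ π : Equiv.Perm (ZMod (p * q)),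
        IsShiftPerm p q π ∧
        (2 - δ) * (totalCycle (p * q) π : ℝ) <
          (swOPT (cycleG (p * q)) (Equiv.refl (ZMod (p * q))) π : ℝ)) := by
  refine ⟨fun p q hp hq π hπ => hπ.totalCycle_eq hp hq, fun δ hδ => ?_⟩
  obtain ⟨L, hL, hδL⟩ : ∃ L : ℕ, 3 ≤ L ∧ 3 ≤ δ * L := by
    refine ⟨max 3 ⌈3 / δ⌉₊, le_max_left _ _, ?_⟩
    calc 3 = δ * (3 / δ) := by field_simp
      _ ≤ δ * (max 3 ⌈3 / δ⌉₊ : ℕ) := by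
        gcongr
        exact (Nat.le_ceil _).trans (by exact_mod_cast le_max_right _ _)
  have : NeZero (L * L) := ⟨by positivity⟩
  obtain ⟨π, hπ⟩ := exists_isShiftPerm (by omega : 0 < L) (by omega : 0 < L)
  refine ⟨L, L, by omega, by omega, π, hπ, ?_⟩
  have hOPT : (2 * L * L - L - 2 * L + 1 : ℝ) ≤ swOPT (cycleG (L * L)) (Equiv.refl _) π := by
    exact_mod_cast hπ.le_swOPT hL
  rw [hπ.totalCycle_eq (by omega) (by omega)]
  push_cast
  nlinarith
end

section
/- In the barrier construction graph (outer cycle of length pq with p even segments and, for each j, an inner path P_j of 2q−2 edges joining v_j and v_{j+2q}), for any two vertices a, b lying on the same inner cycle C^in_j, every path from a to b that uses at least one edge not in C^in_j has length at least dist(a,b) + 2. -/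
/-- Vertices of the barrier construction: the outer cycle `v_0, ..., v_{pq-1}`
(as `ZMod (p*q)`) together with, for each `j`, the `2q-3` internal vertices of
the inner path `P_j` of `2q-2` edges joining `v_j` and `v_{j+2q}`. -/
abbrev BV (p q : ℕ) := ZMod (p * q) ⊕ (ZMod (p * q) × Fin (2 * q - 3))

/-- Adjacency of the barrier construction: outer cycle edges, and for each `j`
the inner path `P_j = v_j, (j,0), (j,1), ..., (j,2q-4), v_{j+2q}`. -/
def barrierAdj (p q : ℕ) (a b : BV p q) : Prop :=
  (∃ i : ZMod (p * q), a = Sum.inl i ∧ b = Sum.inl (i + 1)) ∨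
  (∃ (j : ZMod (p * q)) (x : Fin (2 * q - 3)), x.val = 0 ∧
    a = Sum.inl j ∧ b = Sum.inr (j, x)) ∨
  (∃ (j : ZMod (p * q)) (x y : Fin (2 * q - 3)), y.val = x.val + 1 ∧
    a = Sum.inr (j, x) ∧ b = Sum.inr (j, y)) ∨
  (∃ (j : ZMod (p * q)) (x : Fin (2 * q - 3)), x.val = 2 * q - 4 ∧
    a = Sum.inr (j, x) ∧ b = Sum.inl (j + ((2 * q : ℕ) : ZMod (p * q))))

def barrierGraph (p q : ℕ) : SimpleGraph (BV p q) :=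
  SimpleGraph.fromRel (barrierAdj p q)

/-- The inner cycle `C^in_j`: the union of the inner paths
`P_j, P_{j+2q}, P_{j+4q}, ...` (including their outer endpoints). -/
def innerCycle (p q : ℕ) (j : ZMod (p * q)) : Set (BV p q) :=
  {w | ∃ r : ℕ, w = Sum.inl (j + ((2 * q * r : ℕ) : ZMod (p * q))) ∨
      ∃ x : Fin (2 * q - 3), w = Sum.inr (j + ((2 * q * r : ℕ) : ZMod (p * q)), x)}

/-!
Let `m = pq - p` be the length of `C^in_j`, and measure distances on the cycle `ℤ/m` by
`|z.valMinAbs|`. For `c ∈ {0, 2}`, map each outer arc `v_{j+2qr}, …, v_{j+2q(r+1)}` onto the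
inner path `P_{j+2qr}` by collapsing its first `c` and its last `2 - c` edges, and lay every inner
path `P_i` along the cycle starting at the image of `v_i`. This gives a map from the whole graph
to `ℤ/m` that moves by at most one along each edge and is the position map on `C^in_j`. An edge
leaving `C^in_j` is an outer edge at some `v_{j+2qr}` and is collapsed by one of the two maps, so
a walk from `a` to `b` that leaves `C^in_j` is longer than the distance `L` from `a` to `b` along
`C^in_j`, and `dist(a,b) ≤ L`. As `pq` and the lengths of the inner paths are even, the graph is
bipartite, so the walk has length `≡ L (mod 2)`, hence at least `L + 2`.
-/

namespace ZMod

variable {n : ℕ}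

lemma natAbs_valMinAbs_intCast_le (D : ℤ) : (D : ZMod n).valMinAbs.natAbs ≤ D.natAbs := by
  rcases n with - | n
  · rfl
  · exact natAbs_min_of_le_div_two _ _ _ (coe_valMinAbs _) (natAbs_valMinAbs_le _)

lemma natAbs_valMinAbs_add_le_add (a b : ZMod n) :
    (a + b).valMinAbs.natAbs ≤ a.valMinAbs.natAbs + b.valMinAbs.natAbs :=
  (natAbs_valMinAbs_add_le a b).trans (Int.natAbs_add_le _ _)

end ZMod

namespace SimpleGraph.Walk

variable {V : Type*} {G : SimpleGraph V} {a b : V}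

section CycleValued

variable {n : ℕ} {f : V → ZMod n}

theorem natAbs_valMinAbs_sub_le_countP
    (hf : ∀ u w, G.Adj u w → (f w - f u).valMinAbs.natAbs ≤ 1) :
    ∀ {a b : V} (W : G.Walk a b),
      (f b - f a).valMinAbs.natAbs ≤ W.darts.countP (fun d => f d.fst ≠ f d.snd)
  | _, _, nil => by simp
  | a, b, cons (v := a') h W => by
    have step : (f a' - f a).valMinAbs.natAbs ≤ if f a ≠ f a' then 1 else 0 := by
      split_ifs with hne
      · exact hf _ _ h
      · rw [not_not.1 hne, sub_self, ZMod.valMinAbs_zero]; rfl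
    calc (f b - f a).valMinAbs.natAbs
        = ((f b - f a') + (f a' - f a)).valMinAbs.natAbs := by rw [sub_add_sub_cancel]
      _ ≤ _ := ZMod.natAbs_valMinAbs_add_le_add _ _
      _ ≤ _ := add_le_add (natAbs_valMinAbs_sub_le_countP hf W) step
      _ = _ := by simp [List.countP_cons]

theorem natAbs_valMinAbs_sub_lt_length
    (hf : ∀ u w, G.Adj u w → (f w - f u).valMinAbs.natAbs ≤ 1) (W : G.Walk a b)
    {d : G.Dart} (hd : d ∈ W.darts) (hfd : f d.fst = f d.snd) :
    (f b - f a).valMinAbs.natAbs < W.length :=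
  calc _ ≤ _ := natAbs_valMinAbs_sub_le_countP hf W
    _ < W.darts.length := List.countP_lt_length_iff.2 ⟨d, hd, by simpa using hfd⟩
    _ = W.length := W.length_darts

end CycleValued

section Parity

variable {c : V → ZMod 2}

theorem natCast_length_eq_sub (hc : ∀ u w, G.Adj u w → c w = c u + 1) :
    ∀ {a b : V} (W : G.Walk a b), (W.length : ZMod 2) = c b - c a
  | _, _, nil => by simp
  | _, _, cons h W => by
    rw [length_cons, Nat.cast_succ, natCast_length_eq_sub hc W, hc _ _ h]; ring

theorem length_mod_two_eq (hc : ∀ u w, G.Adj u w → c w = c u + 1) (U W : G.Walk a b) :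
    U.length % 2 = W.length % 2 :=
  (ZMod.natCast_eq_natCast_iff' _ _ 2).1 <| by
    rw [natCast_length_eq_sub hc U, natCast_length_eq_sub hc W]

end Parity

theorem exists_dart_fst_mem_snd_notMem {S : Set V} (W : G.Walk a b) (ha : a ∈ S) {v : V}
    (hv : v ∈ W.support) (hvS : v ∉ S) : ∃ d ∈ W.darts, d.fst ∈ S ∧ d.snd ∉ S := by
  classical
  obtain ⟨d, hd, h⟩ := (W.takeUntil v hv).exists_boundary_dart S ha hvS
  exact ⟨d, W.darts_takeUntil_subset_darts hv hd, h⟩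

end SimpleGraph.Walk

namespace Barrier

/-- Collapses the first `c` and the last `2 - c` edges of each outer arc
`v_{2qr}, …, v_{2q(r+1)}`. -/
def arcProj (q c n : ℕ) : ℕ := (2 * q - 2) * (n / (2 * q)) + min (n % (2 * q) - c) (2 * q - 2)

section ArcProj

variable {q c n : ℕ}

lemma arcProj_mul_add (hq : 0 < q) (r : ℕ) {s : ℕ} (hs : s < 2 * q) :
    arcProj q c (2 * q * r + s) = (2 * q - 2) * r + min (s - c) (2 * q - 2) := by
  rw [arcProj, Nat.mul_add_div (by omega), Nat.div_eq_of_lt hs, Nat.mul_add_mod,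
    Nat.mod_eq_of_lt hs, add_zero]

lemma arcProj_add_mul (hq : 0 < q) (n k : ℕ) :
    arcProj q c (n + 2 * q * k) = arcProj q c n + (2 * q - 2) * k := by
  have hn : n + 2 * q * k = 2 * q * (n / (2 * q) + k) + n % (2 * q) := by
    rw [mul_add]; have := Nat.div_add_mod n (2 * q); omega
  rw [hn, arcProj_mul_add hq _ (Nat.mod_lt _ (by omega)), arcProj]; ring

lemma arcProj_add_two_mul (hq : 0 < q) (n : ℕ) :
    arcProj q c (n + 2 * q) = arcProj q c n + (2 * q - 2) := by
  simpa using arcProj_add_mul (c := c) hq n 1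

lemma arcProj_two_mul (hq : 0 < q) (c r : ℕ) : arcProj q c (2 * q * r) = (2 * q - 2) * r := by
  simpa using arcProj_mul_add (c := c) hq r (s := 0) (by omega)

lemma arcProj_succ (hq : 0 < q) (hc : c ≤ 2) (n : ℕ) :
    arcProj q c (n + 1) = arcProj q c n ∨ arcProj q c (n + 1) = arcProj q c n + 1 := by
  obtain ⟨r, s, hs, rfl⟩ : ∃ r s, s < 2 * q ∧ n = 2 * q * r + s :=
    ⟨_, _, Nat.mod_lt n (by omega), (Nat.div_add_mod n _).symm⟩
  rw [arcProj_mul_add hq r hs]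
  rcases Nat.lt_or_ge (s + 1) (2 * q) with h | h
  · rw [add_assoc, arcProj_mul_add hq r h]; omega
  · have hs : s = 2 * q - 1 := by omega
    rw [hs, show 2 * q * r + (2 * q - 1) + 1 = 2 * q * (r + 1) by rw [mul_add]; omega,
      arcProj_two_mul hq, mul_add]
    omega

lemma arcProj_two_succ_of_dvd (hq : 0 < q) (h : 2 * q ∣ n) :
    arcProj q 2 (n + 1) = arcProj q 2 n := by
  obtain ⟨r, rfl⟩ := h
  rw [arcProj_mul_add hq r (by omega), arcProj_two_mul hq]; omega

lemma arcProj_zero_succ_of_dvd (hq : 0 < q) (h : 2 * q ∣ n + 1) :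
    arcProj q 0 (n + 1) = arcProj q 0 n := by
  obtain ⟨r, hr⟩ := h
  obtain ⟨r, rfl⟩ : ∃ r', r = r' + 1 := ⟨r - 1, by rcases r with - | r <;> simp_all⟩
  rw [hr, arcProj_two_mul hq, show n = 2 * q * r + (2 * q - 1) by rw [mul_add] at hr; omega,
    arcProj_mul_add hq r (by omega), mul_add]
  omega

end ArcProj

variable {p q : ℕ} {j : ZMod (p * q)}

/-- `pq - p` when `p` is even. -/
def innerLen (p q : ℕ) : ℕ := (2 * q - 2) * (p / 2)

def innerProj (p q : ℕ) (j : ZMod (p * q)) (c : ℕ) : BV p q → ZMod (innerLen p q)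
  | .inl i => (arcProj q c (i - j).val : ℕ)
  | .inr (i, x) => (arcProj q c (i - j).val : ℕ) + x.val + 1

lemma two_mul_mul_div_two (hp : Even p) : 2 * q * (p / 2) = p * q := by
  obtain ⟨k, rfl⟩ := hp
  rw [← two_mul, Nat.mul_div_cancel_left _ two_pos]; ring

lemma natCast_arcProj_mod (hp : Even p) (hq : 0 < q) (c n : ℕ) :
    ((arcProj q c (n % (p * q)) : ℕ) : ZMod (innerLen p q)) = arcProj q c n := by
  have hn : n = n % (p * q) + 2 * q * (p / 2 * (n / (p * q))) := by
    rw [← mul_assoc, two_mul_mul_div_two hp, Nat.mod_add_div]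
  have hlen : (((2 * q - 2) * (p / 2) : ℕ) : ZMod (innerLen p q)) = 0 := ZMod.natCast_self _
  conv_rhs => rw [hn, arcProj_add_mul hq, ← mul_assoc, Nat.cast_add, Nat.cast_mul, hlen]
  simp

variable {n : ℕ} {i : ZMod (p * q)}

lemma innerProj_inl (hp : Even p) (hq : 0 < q) {c : ℕ} (hn : (n : ZMod (p * q)) = i - j) :
    innerProj p q j c (.inl i) = arcProj q c n := by
  rw [innerProj, ← hn, ZMod.val_natCast, natCast_arcProj_mod hp hq]

lemma innerProj_inr (hp : Even p) (hq : 0 < q) {c : ℕ} (hn : (n : ZMod (p * q)) = i - j)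
    (x : Fin (2 * q - 3)) :
    innerProj p q j c (.inr (i, x)) = arcProj q c n + x.val + 1 := by
  rw [innerProj, ← hn, ZMod.val_natCast, natCast_arcProj_mod hp hq]

lemma exists_eq_add_two_mul_iff_dvd (hp : Even p) (hn : (n : ZMod (p * q)) = i - j) :
    (∃ r : ℕ, i = j + ((2 * q * r : ℕ) : ZMod (p * q))) ↔ 2 * q ∣ n := by
  simp_rw [← sub_eq_iff_eq_add', ← hn, ZMod.natCast_eq_natCast_iff]
  constructor
  · rintro ⟨r, hr⟩
    exact (hr.dvd_iff ⟨p / 2, (two_mul_mul_div_two hp).symm⟩).2 (dvd_mul_right _ _)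
  · rintro ⟨r, rfl⟩
    exact ⟨r, rfl⟩

lemma inl_mem_innerCycle_iff (hp : Even p) (hn : (n : ZMod (p * q)) = i - j) :
    .inl i ∈ innerCycle p q j ↔ 2 * q ∣ n := by
  simpa [innerCycle] using exists_eq_add_two_mul_iff_dvd hp hn

lemma inr_mem_innerCycle_iff (hp : Even p) (hn : (n : ZMod (p * q)) = i - j)
    (x : Fin (2 * q - 3)) : .inr (i, x) ∈ innerCycle p q j ↔ 2 * q ∣ n := by
  simpa [innerCycle] using exists_eq_add_two_mul_iff_dvd hp hn

variable {u w : BV p q}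

lemma natCast_val_sub [NeZero (p * q)] (i j : ZMod (p * q)) :
    (((i - j).val : ℕ) : ZMod (p * q)) = i - j :=
  ZMod.natCast_zmod_val _

lemma natCast_val_sub_add_one [NeZero (p * q)] (i j : ZMod (p * q)) :
    (((i - j).val + 1 : ℕ) : ZMod (p * q)) = i + 1 - j := by
  push_cast; rw [ZMod.natCast_zmod_val]; ring

lemma natCast_val_sub_add_two_mul [NeZero (p * q)] (i j : ZMod (p * q)) :
    (((i - j).val + 2 * q : ℕ) : ZMod (p * q)) = i + ((2 * q : ℕ) : ZMod (p * q)) - j := by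
  push_cast; rw [ZMod.natCast_zmod_val]; ring

lemma innerProj_eq_or_eq_add_one_of_barrierAdj [NeZero (p * q)] (hp : Even p) (hq : 0 < q)
    {c : ℕ} (hc : c ≤ 2) (h : barrierAdj p q u w) :
    innerProj p q j c w = innerProj p q j c u ∨
      innerProj p q j c w = innerProj p q j c u + 1 := by
  rcases h with ⟨i, rfl, rfl⟩ | ⟨i, x, hx, rfl, rfl⟩ | ⟨i, x, y, hxy, rfl, rfl⟩ |
    ⟨i, x, hx, rfl, rfl⟩
  · rw [innerProj_inl hp hq (natCast_val_sub_add_one i j)]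
    rcases arcProj_succ hq hc (i - j).val with h | h <;> rw [h] <;> simp [innerProj]
  · simp [innerProj, hx]
  · right; simp only [innerProj, hxy]; push_cast; ring
  · right
    rw [innerProj_inl hp hq (natCast_val_sub_add_two_mul i j),
      arcProj_add_two_mul hq, show 2 * q - 2 = x.val + 1 + 1 by omega]
    simp only [innerProj]; push_cast; ring

lemma natAbs_valMinAbs_innerProj_sub_le [NeZero (p * q)] (hp : Even p) (hq : 0 < q) {c : ℕ}
    (hc : c ≤ 2) (h : (barrierGraph p q).Adj u w) :
    (innerProj p q j c w - innerProj p q j c u).valMinAbs.natAbs ≤ 1 := by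
  have h1 : (1 : ZMod (innerLen p q)).valMinAbs.natAbs ≤ 1 := by
    simpa using ZMod.natAbs_valMinAbs_intCast_le (n := innerLen p q) 1
  rw [barrierGraph, SimpleGraph.fromRel_adj] at h
  rcases h.2 with h | h <;>
    rcases innerProj_eq_or_eq_add_one_of_barrierAdj (j := j) hp hq hc h with e | e <;>
    simp [e, h1, ZMod.natAbs_valMinAbs_neg]

lemma barrierAdj_outer_or_mem_innerCycle_iff [NeZero (p * q)] (hp : Even p)
    (h : barrierAdj p q u w) :
    (∃ i, u = .inl i ∧ w = .inl (i + 1)) ∨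
      (u ∈ innerCycle p q j ↔ w ∈ innerCycle p q j) := by
  rcases h with h | ⟨i, x, -, rfl, rfl⟩ | ⟨i, x, y, -, rfl, rfl⟩ | ⟨i, x, -, rfl, rfl⟩
  · exact .inl h
  all_goals
    right
    have hi := natCast_val_sub i j
  · rw [inl_mem_innerCycle_iff hp hi, inr_mem_innerCycle_iff hp hi]
  · rw [inr_mem_innerCycle_iff hp hi, inr_mem_innerCycle_iff hp hi]
  · rw [inr_mem_innerCycle_iff hp hi,
      inl_mem_innerCycle_iff hp (natCast_val_sub_add_two_mul i j), Nat.dvd_add_self_right]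

lemma innerProj_eq_or_eq_of_adj [NeZero (p * q)] (hp : Even p) (hq : 0 < q)
    (h : (barrierGraph p q).Adj u w) (hu : u ∈ innerCycle p q j) (hw : w ∉ innerCycle p q j) :
    innerProj p q j 0 u = innerProj p q j 0 w ∨ innerProj p q j 2 u = innerProj p q j 2 w := by
  rw [barrierGraph, SimpleGraph.fromRel_adj] at h
  rcases h.2 with h | h <;> rcases barrierAdj_outer_or_mem_innerCycle_iff (j := j) hp h with
    ⟨i, rfl, rfl⟩ | hiff
  · have hi := natCast_val_sub i j
    right
    rw [innerProj_inl hp hq hi, innerProj_inl hp hq (natCast_val_sub_add_one i j),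
      arcProj_two_succ_of_dvd hq ((inl_mem_innerCycle_iff hp hi).1 hu)]
  · exact absurd (hiff.1 hu) hw
  · have hi := natCast_val_sub_add_one i j
    left
    rw [innerProj_inl hp hq hi, innerProj_inl hp hq (natCast_val_sub i j),
      arcProj_zero_succ_of_dvd hq ((inl_mem_innerCycle_iff hp hi).1 hu)]
  · exact absurd (hiff.2 hu) hw

lemma innerProj_eq_of_mem [NeZero (p * q)] (hp : Even p) (hq : 0 < q)
    (hu : u ∈ innerCycle p q j) (c c' : ℕ) : innerProj p q j c u = innerProj p q j c' u := by
  rcases u with i | ⟨i, x⟩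
  · obtain ⟨r, hr⟩ := (inl_mem_innerCycle_iff hp (natCast_val_sub i j)).1 hu
    simp only [innerProj_inl hp hq (natCast_val_sub i j), hr, arcProj_two_mul hq]
  · obtain ⟨r, hr⟩ := (inr_mem_innerCycle_iff hp (natCast_val_sub i j) x).1 hu
    simp only [innerProj_inr hp hq (natCast_val_sub i j), hr, arcProj_two_mul hq]

def parity : BV p q → ZMod 2
  | .inl i => i.cast
  | .inr (i, x) => i.cast + x.val + 1

lemma parity_eq_add_one_of_barrierAdj (hp : Even p) (h : barrierAdj p q u w) :
    parity w = parity u + 1 := by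
  have h2 : 2 ∣ p * q := hp.two_dvd.mul_right q
  rcases h with ⟨i, rfl, rfl⟩ | ⟨i, x, hx, rfl, rfl⟩ | ⟨i, x, y, hxy, rfl, rfl⟩ |
    ⟨i, x, hx, rfl, rfl⟩
  · simp [parity, ZMod.cast_add h2, ZMod.cast_one h2]
  · simp [parity, hx]
  · simp only [parity, hxy]; push_cast; ring
  · have h2q : ((2 * q : ℕ) : ZMod 2) = 0 :=
      (ZMod.natCast_eq_zero_iff _ _).2 (dvd_mul_right 2 q)
    have hx2 : (x.val : ZMod 2) + 1 + 1 = 0 := by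
      exact_mod_cast (ZMod.natCast_eq_zero_iff _ _).2 ⟨q - 1, by omega⟩
    simp only [parity, ZMod.cast_add h2, ZMod.cast_natCast h2, h2q]
    linear_combination -hx2

lemma parity_adj (hp : Even p) (h : (barrierGraph p q).Adj u w) : parity w = parity u + 1 := by
  rw [barrierGraph, SimpleGraph.fromRel_adj] at h
  rcases h.2 with h | h
  · exact parity_eq_add_one_of_barrierAdj hp h
  · rw [parity_eq_add_one_of_barrierAdj hp h, add_assoc, show (1 + 1 : ZMod 2) = 0 by decide,
      add_zero]

variable (j) in
/-- The vertex `t` steps after `v_j` along `C^in_j`, which starts with `P_j`. -/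
def cycleVertex (hq : 2 ≤ q) (t : ℕ) : BV p q :=
  if t % (2 * q - 2) = 0 then .inl (j + ((2 * q * (t / (2 * q - 2)) : ℕ) : ZMod (p * q)))
  else .inr (j + ((2 * q * (t / (2 * q - 2)) : ℕ) : ZMod (p * q)),
    ⟨t % (2 * q - 2) - 1, by have := Nat.mod_lt t (show 0 < 2 * q - 2 by omega); omega⟩)

lemma cycleVertex_mul (hq : 2 ≤ q) (r : ℕ) :
    cycleVertex j hq ((2 * q - 2) * r) = .inl (j + ((2 * q * r : ℕ) : ZMod (p * q))) := by
  simp [cycleVertex, Nat.mul_div_cancel_left r (show 0 < 2 * q - 2 by omega)]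

lemma cycleVertex_mul_add_succ (hq : 2 ≤ q) (r : ℕ) {s : ℕ} (hs : s + 1 < 2 * q - 2) :
    cycleVertex j hq ((2 * q - 2) * r + (s + 1)) =
      .inr (j + ((2 * q * r : ℕ) : ZMod (p * q)), ⟨s, by omega⟩) := by
  rw [cycleVertex, if_neg (by rw [Nat.mul_add_mod, Nat.mod_eq_of_lt hs]; omega)]
  simp [Nat.mul_add_div (show 0 < 2 * q - 2 by omega), Nat.div_eq_of_lt hs, Nat.mod_eq_of_lt hs]

lemma cycleVertex_adj (hq : 2 ≤ q) (t : ℕ) :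
    (barrierGraph p q).Adj (cycleVertex j hq t) (cycleVertex j hq (t + 1)) := by
  obtain ⟨r, s, hs, rfl⟩ : ∃ r s, s < 2 * q - 2 ∧ t = (2 * q - 2) * r + s :=
    ⟨_, _, Nat.mod_lt t (by omega), (Nat.div_add_mod t _).symm⟩
  rw [barrierGraph, SimpleGraph.fromRel_adj]
  rcases s with - | s
  · rw [add_zero, cycleVertex_mul, cycleVertex_mul_add_succ hq r (s := 0) (by omega)]
    exact ⟨by simp, .inl (.inr (.inl ⟨_, _, rfl, rfl, rfl⟩))⟩
  rcases Nat.lt_or_ge (s + 2) (2 * q - 2) with h | h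
  · rw [cycleVertex_mul_add_succ hq r (by omega), add_assoc, cycleVertex_mul_add_succ hq r h]
    exact ⟨by simp, .inl (.inr (.inr (.inl ⟨_, _, _, rfl, rfl, rfl⟩)))⟩
  · rw [cycleVertex_mul_add_succ hq r (by omega),
      show (2 * q - 2) * r + (s + 1) + 1 = (2 * q - 2) * (r + 1) by rw [mul_add]; omega,
      cycleVertex_mul]
    refine ⟨by simp, .inl (.inr (.inr (.inr ⟨_, _, by simp; omega, rfl, ?_⟩)))⟩
    push_cast; ring_nf

lemma innerProj_cycleVertex (hq : 2 ≤ q) (hp : Even p) (c t : ℕ) :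
    innerProj p q j c (cycleVertex j hq t) = t := by
  obtain ⟨r, s, hs, rfl⟩ : ∃ r s, s < 2 * q - 2 ∧ t = (2 * q - 2) * r + s :=
    ⟨_, _, Nat.mod_lt t (by omega), (Nat.div_add_mod t _).symm⟩
  have hn : ((2 * q * r : ℕ) : ZMod (p * q)) = j + ((2 * q * r : ℕ) : ZMod (p * q)) - j := by
    ring
  rcases s with - | s
  · rw [add_zero, cycleVertex_mul, innerProj_inl hp (by omega) hn, arcProj_two_mul (by omega)]
  · rw [cycleVertex_mul_add_succ hq r hs, innerProj_inr hp (by omega) hn,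
      arcProj_two_mul (by omega)]
    push_cast; ring

lemma cycleVertex_add_innerLen (hq : 2 ≤ q) (hp : Even p) (t : ℕ) :
    cycleVertex j hq (t + innerLen p q) = cycleVertex j hq t := by
  have hK : 0 < 2 * q - 2 := by omega
  have hcast : ((2 * q * (t / (2 * q - 2) + p / 2) : ℕ) : ZMod (p * q)) =
      ((2 * q * (t / (2 * q - 2)) : ℕ) : ZMod (p * q)) := by
    rw [mul_add, two_mul_mul_div_two hp, Nat.cast_add, ZMod.natCast_self, add_zero]
  simp only [cycleVertex, innerLen, Nat.add_mul_mod_self_left, Nat.add_mul_div_left _ _ hK,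
    hcast]

lemma cycleVertex_eq_of_natCast_eq (hq : 2 ≤ q) (hp : Even p) {s t : ℕ}
    (h : (s : ZMod (innerLen p q)) = t) : cycleVertex j hq s = cycleVertex j hq t := by
  have hmul (t k : ℕ) : cycleVertex j hq (t + innerLen p q * k) = cycleVertex j hq t := by
    induction k with
    | zero => simp
    | succ k ih => rw [mul_add_one, ← add_assoc, cycleVertex_add_innerLen hq hp, ih]
  rw [← Nat.mod_add_div s (innerLen p q), ← Nat.mod_add_div t (innerLen p q), hmul, hmul,
    (ZMod.natCast_eq_natCast_iff' _ _ _).1 h]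

lemma exists_cycleVertex_eq (hq : 2 ≤ q) {a : BV p q} (ha : a ∈ innerCycle p q j) :
    ∃ t, cycleVertex j hq t = a := by
  obtain ⟨r, rfl | ⟨x, rfl⟩⟩ := ha
  · exact ⟨_, cycleVertex_mul hq r⟩
  · exact ⟨_, cycleVertex_mul_add_succ hq r (s := x.val) (by omega)⟩

lemma exists_walk_cycleVertex (hq : 2 ≤ q) (t k : ℕ) :
    ∃ U : (barrierGraph p q).Walk (cycleVertex j hq t) (cycleVertex j hq (t + k)),
      U.length = k := by
  induction k with
  | zero => exact ⟨.nil, rfl⟩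
  | succ k ih =>
    obtain ⟨U, hU⟩ := ih
    exact ⟨U.concat (cycleVertex_adj hq (t + k)), by rw [SimpleGraph.Walk.length_concat, hU]⟩

lemma exists_walk_of_natCast_eq {a b : BV p q} (hq : 2 ≤ q) (hp : Even p)
    (ha : a ∈ innerCycle p q j) (hb : b ∈ innerCycle p q j) {k : ℕ}
    (hk : (k : ZMod (innerLen p q)) = innerProj p q j 0 b - innerProj p q j 0 a) :
    ∃ U : (barrierGraph p q).Walk a b, U.length = k := by
  obtain ⟨ta, rfl⟩ := exists_cycleVertex_eq hq ha
  obtain ⟨tb, rfl⟩ := exists_cycleVertex_eq hq hb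
  obtain ⟨U, hU⟩ := exists_walk_cycleVertex hq (j := j) ta k
  refine ⟨U.copy rfl (cycleVertex_eq_of_natCast_eq hq hp ?_),
    by rw [SimpleGraph.Walk.length_copy, hU]⟩
  rw [Nat.cast_add, hk, innerProj_cycleVertex hq hp, innerProj_cycleVertex hq hp]
  ring

lemma exists_walk_length_eq {a b : BV p q} (hq : 2 ≤ q) (hp : Even p)
    (ha : a ∈ innerCycle p q j) (hb : b ∈ innerCycle p q j) :
    ∃ U : (barrierGraph p q).Walk a b,
      U.length = (innerProj p q j 0 b - innerProj p q j 0 a).valMinAbs.natAbs := by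
  set δ := innerProj p q j 0 b - innerProj p q j 0 a
  rcases le_or_gt 0 δ.valMinAbs with h | h
  · refine exists_walk_of_natCast_eq hq hp ha hb ?_
    rw [← Int.cast_natCast, Int.natAbs_of_nonneg h, ZMod.coe_valMinAbs]
  · obtain ⟨U, hU⟩ := exists_walk_of_natCast_eq hq hp hb ha
      (k := δ.valMinAbs.natAbs) (by
        rw [← Int.cast_natCast, Int.ofNat_natAbs_of_nonpos h.le, Int.cast_neg,
          ZMod.coe_valMinAbs]
        ring)
    exact ⟨U.reverse, by rw [SimpleGraph.Walk.length_reverse, hU]⟩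

end Barrier

open Barrier

theorem stmt12_general (p q : ℕ) (hp : Even p) (hp2 : 2 ≤ p) (hq : 2 ≤ q)
    (j : ZMod (p * q)) (a b : BV p q)
    (ha : a ∈ innerCycle p q j) (hb : b ∈ innerCycle p q j)
    (W : (barrierGraph p q).Walk a b)
    (hout : ∃ e ∈ W.edges, ¬ ∀ v ∈ e, v ∈ innerCycle p q j) :
    (barrierGraph p q).dist a b + 2 ≤ W.length := by
  have : NeZero (p * q) := ⟨Nat.mul_ne_zero (by omega) (by omega)⟩
  have hq0 : 0 < q := by omega
  obtain ⟨U, hU⟩ := exists_walk_length_eq hq hp ha hb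
  have hlt : U.length < W.length := by
    obtain ⟨e, he, hne⟩ := hout
    push Not at hne
    obtain ⟨v, hve, hv⟩ := hne
    obtain ⟨d, hd, hdu, hdw⟩ :=
      W.exists_dart_fst_mem_snd_notMem ha (SimpleGraph.Walk.mem_support_of_mem_edges he hve) hv
    rw [hU]
    rcases innerProj_eq_or_eq_of_adj hp hq0 d.adj hdu hdw with h | h
    · exact W.natAbs_valMinAbs_sub_lt_length
        (fun _ _ => natAbs_valMinAbs_innerProj_sub_le hp hq0 (Nat.zero_le 2)) hd h
    · rw [innerProj_eq_of_mem hp hq0 ha 0 2, innerProj_eq_of_mem hp hq0 hb 0 2]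
      exact W.natAbs_valMinAbs_sub_lt_length
        (fun _ _ => natAbs_valMinAbs_innerProj_sub_le hp hq0 le_rfl) hd h
  have hpar := SimpleGraph.Walk.length_mod_two_eq (fun _ _ => parity_adj hp) U W
  have hdist := SimpleGraph.dist_le U
  omega

/-- Any simple path between two vertices `a, b` of the same inner cycle that
uses at least one edge not contained in that inner cycle has length at least
`dist(a,b) + 2`. -/
theorem stmt12 (p q : ℕ) (hp : Even p) (hp2 : 2 ≤ p) (hq : 2 ≤ q)
    (j : ZMod (p * q)) (a b : BV p q)
    (ha : a ∈ innerCycle p q j) (hb : b ∈ innerCycle p q j)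
    (W : (barrierGraph p q).Walk a b) (hW : W.IsPath)
    (hout : ∃ e ∈ W.edges, ¬ ∀ v ∈ e, v ∈ innerCycle p q j) :
    (barrierGraph p q).dist a b + 2 ≤ W.length :=
  stmt12_general p q hp hp2 hq j a b ha hb W hout
end

section
/- In the barrier construction, for any vertex a on inner cycle C^in_j, any vertex b on C^in_j, and any neighbor c of a not on C^in_j, it holds that dist(a,b) < dist(c,b). Consequently, if every token starts on the same inner cycle as its target, then any swap along an edge of the outer cycle moves both participating tokens strictly farther from their destinations (is not locally optimal). -/
/-!
The inner cycle `C^in_j` is a cycle of length `p(q-1)`; walking along it bounds `dist(a, b)` by the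
cyclic distance of the positions of `a` and `b`. For the converse we use a potential `φ` that
changes by at most one along every edge, vanishes at `b` and equals the cyclic distance to `b` on
`C^in_j`; hence `φ ≤ dist(·, b)`. Off `C^in_j`, a vertex gets the cheapest way of first reaching
`C^in_j` and then going around it. An outer vertex at offset `t` inside the block between two
consecutive vertices `v_{j+2qr}`, `v_{j+2q(r+1)}` of `C^in_j` is `t` resp. `2q - t` steps from
them, while the inner path joining them has only `2q - 2` edges. So stepping off `C^in_j` along an
outer edge raises `φ` by one, and `dist(c, b) ≥ φ(c) = φ(a) + 1 > dist(a, b)`.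
-/

def cycDist {n : ℕ} (x y : ZMod n) : ℕ := (y - x).valMinAbs.natAbs

section CycDist

variable {n : ℕ}

lemma cycDist_self (x : ZMod n) : cycDist x x = 0 := by
  simp [cycDist]

lemma cycDist_comm (x y : ZMod n) : cycDist x y = cycDist y x := by
  rw [cycDist, cycDist, ← ZMod.natAbs_valMinAbs_neg, neg_sub]

lemma cycDist_triangle (x y z : ZMod n) : cycDist x z ≤ cycDist x y + cycDist y z := by
  unfold cycDist
  calc (z - x).valMinAbs.natAbs = ((y - x) + (z - y)).valMinAbs.natAbs := by
        rw [sub_add_sub_cancel']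
    _ ≤ ((y - x).valMinAbs + (z - y).valMinAbs).natAbs := ZMod.natAbs_valMinAbs_add_le _ _
    _ ≤ _ := Int.natAbs_add_le _ _

lemma cycDist_eq_min [NeZero n] (x y : ZMod n) : cycDist x y = min (y - x).val (x - y).val := by
  rw [cycDist, ZMod.valMinAbs_natAbs_eq_min, ← neg_sub y x, ZMod.neg_val]
  split_ifs with h
  · simp [h]
  · rfl

lemma cycDist_add_natCast_le [NeZero n] (x : ZMod n) (k : ℕ) :
    cycDist x (x + (k : ZMod n)) ≤ k := by
  rw [cycDist_eq_min, add_sub_cancel_left]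
  exact (min_le_left _ _).trans ((ZMod.val_natCast n k).trans_le (Nat.mod_le k n))

lemma cycDist_natCast_add_le [NeZero n] (a k : ℕ) (y : ZMod n) :
    cycDist ((a + k : ℕ) : ZMod n) y ≤ k + cycDist (a : ZMod n) y := by
  have := cycDist_add_natCast_le (a : ZMod n) k
  rw [cycDist_comm] at this
  push_cast
  linarith [cycDist_triangle ((a : ZMod n) + (k : ZMod n)) a y]

lemma cycDist_natCast_le_add [NeZero n] (a k : ℕ) (y : ZMod n) :
    cycDist (a : ZMod n) y ≤ k + cycDist ((a + k : ℕ) : ZMod n) y := by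
  have := cycDist_add_natCast_le (a : ZMod n) k
  push_cast
  linarith [cycDist_triangle (a : ZMod n) ((a : ZMod n) + (k : ZMod n)) y]

end CycDist

lemma ZMod.natCast_add_eq_of_dvd {n m : ℕ} (hm : n ∣ m) (a : ℕ) : ((a + m : ℕ) : ZMod n) = a := by
  rw [Nat.cast_add, (ZMod.natCast_eq_zero_iff _ _).mpr hm, add_zero]

lemma Nat.exists_eq_mul_add_lt {k : ℕ} (hk : 0 < k) (d : ℕ) : ∃ r t, t < k ∧ d = k * r + t :=
  ⟨d / k, d % k, Nat.mod_lt d hk, (Nat.div_add_mod d k).symm⟩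

lemma Function.Periodic.eq_of_natCast_eq {α : Type*} {f : ℕ → α} {n : ℕ}
    (hf : Function.Periodic f n) {a b : ℕ} (h : (a : ZMod n) = b) : f a = f b := by
  rw [← hf.map_mod_nat a, ← hf.map_mod_nat b, (ZMod.natCast_eq_natCast_iff' a b n).mp h]

namespace SimpleGraph

variable {V : Type*} {G : SimpleGraph V}

lemma Walk.le_length_add_of_forall_adj {φ : V → ℕ} (hφ : ∀ v w, G.Adj v w → φ v ≤ φ w + 1) :
    ∀ {v w : V} (W : G.Walk v w), φ v ≤ W.length + φ w
  | _, _, .nil => by simp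
  | _, _, .cons h W => by
    have := hφ _ _ h
    have := W.le_length_add_of_forall_adj hφ
    rw [Walk.length_cons]
    omega

lemma Reachable.le_dist_add_of_forall_adj {φ : V → ℕ} (hφ : ∀ v w, G.Adj v w → φ v ≤ φ w + 1)
    {v w : V} (h : G.Reachable v w) : φ v ≤ G.dist v w + φ w := by
  obtain ⟨W, hW⟩ := h.exists_walk_length_eq_dist
  exact hW ▸ W.le_length_add_of_forall_adj hφ

lemma exists_walk_length_eq_of_adj_succ {ψ : ℕ → V} (hψ : ∀ k, G.Adj (ψ k) (ψ (k + 1)))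
    (a k : ℕ) : ∃ W : G.Walk (ψ a) (ψ (a + k)), W.length = k := by
  induction k with
  | zero => exact ⟨.nil, rfl⟩
  | succ k ih =>
    obtain ⟨W, hW⟩ := ih
    exact ⟨W.concat (hψ _), by rw [Walk.length_concat, hW]⟩

lemma reachable_and_dist_le_cycDist {n : ℕ} [NeZero n] {ψ : ℕ → V}
    (hper : Function.Periodic ψ n) (hψ : ∀ k, G.Adj (ψ k) (ψ (k + 1))) (a b : ℕ) :
    G.Reachable (ψ a) (ψ b) ∧ G.dist (ψ a) (ψ b) ≤ cycDist (a : ZMod n) (b : ZMod n) := by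
  have walk (a b : ℕ) : ∃ W : G.Walk (ψ a) (ψ b), W.length = ((b : ZMod n) - a).val := by
    rw [hper.eq_of_natCast_eq (a := b) (b := a + ((b : ZMod n) - a).val) (by simp)]
    exact exists_walk_length_eq_of_adj_succ hψ a _
  obtain ⟨W, hW⟩ := walk a b
  obtain ⟨W', hW'⟩ := walk b a
  refine ⟨W.reachable, ?_⟩
  rw [cycDist_eq_min]
  exact le_min (hW ▸ dist_le W) (dist_comm.trans_le (hW' ▸ dist_le W'))

end SimpleGraph

section Potential

/-- An outer vertex at offset `d = 2q r + t` (`t < 2q`) from `v_j` lies on the outer arc of length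
`2q` between the vertices at positions `(2q-2) r` and `(2q-2) (r+1)` of `C^in_j`. -/
def outerPot (q : ℕ) {L : ℕ} (β : ZMod L) (d : ℕ) : ℕ :=
  min (d % (2 * q) + cycDist (((2 * q - 2) * (d / (2 * q)) : ℕ) : ZMod L) β)
    (2 * q - d % (2 * q) + cycDist (((2 * q - 2) * (d / (2 * q) + 1) : ℕ) : ZMod L) β)

/-- The inner vertex `(j + d, x)` lies on `C^in_j` iff `2q ∣ d`, at position
`(2q-2) (d/2q) + x + 1`; otherwise it leaves its inner path through one of the two ends. -/
def innerPot (q : ℕ) {L : ℕ} (β : ZMod L) (d x : ℕ) : ℕ :=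
  if 2 * q ∣ d then cycDist (((2 * q - 2) * (d / (2 * q)) + (x + 1) : ℕ) : ZMod L) β
  else min (x + 1 + outerPot q β d) (2 * q - 3 - x + outerPot q β (d + 2 * q))

variable {q L : ℕ} (β : ZMod L)

lemma outerPot_mul_add {r t : ℕ} (ht : t < 2 * q) :
    outerPot q β (2 * q * r + t) =
      min (t + cycDist (((2 * q - 2) * r : ℕ) : ZMod L) β)
        (2 * q - t + cycDist (((2 * q - 2) * (r + 1) : ℕ) : ZMod L) β) := by
  rw [outerPot, Nat.mul_add_mod, Nat.mod_eq_of_lt ht, Nat.mul_add_div (by omega),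
    Nat.div_eq_of_lt ht, add_zero]

lemma innerPot_two_mul (hq : 0 < q) (r x : ℕ) :
    innerPot q β (2 * q * r) x = cycDist (((2 * q - 2) * r + (x + 1) : ℕ) : ZMod L) β := by
  rw [innerPot, if_pos (dvd_mul_right _ _), Nat.mul_div_cancel_left _ (by omega)]

lemma innerPot_of_not_dvd {d : ℕ} (hd : ¬2 * q ∣ d) (x : ℕ) :
    innerPot q β d x = min (x + 1 + outerPot q β d) (2 * q - 3 - x + outerPot q β (d + 2 * q)) :=
  if_neg hd

lemma outerPot_periodic (hq : 0 < q) {u : ℕ} (hL : L ∣ (2 * q - 2) * u) :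
    Function.Periodic (outerPot q β) (2 * q * u) := by
  intro d
  obtain ⟨r, t, ht, rfl⟩ := Nat.exists_eq_mul_add_lt (by omega : 0 < 2 * q) d
  rw [show 2 * q * r + t + 2 * q * u = 2 * q * (r + u) + t by ring, outerPot_mul_add β ht,
    outerPot_mul_add β ht, add_right_comm r u 1, mul_add, mul_add _ (r + 1),
    ZMod.natCast_add_eq_of_dvd hL, ZMod.natCast_add_eq_of_dvd hL]

lemma innerPot_periodic (hq : 0 < q) {u : ℕ} (hL : L ∣ (2 * q - 2) * u) (x : ℕ) :
    Function.Periodic (fun d ↦ innerPot q β d x) (2 * q * u) := by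
  intro d
  by_cases hd : 2 * q ∣ d
  · obtain ⟨r, rfl⟩ := hd
    change innerPot q β (2 * q * r + 2 * q * u) x = innerPot q β (2 * q * r) x
    rw [← mul_add, innerPot_two_mul β hq, innerPot_two_mul β hq, mul_add, add_right_comm,
      ZMod.natCast_add_eq_of_dvd hL]
  · have hd' : ¬2 * q ∣ d + 2 * q * u := fun h ↦ hd ((Nat.dvd_add_left (dvd_mul_right _ _)).mp h)
    change innerPot q β (d + 2 * q * u) x = innerPot q β d x
    rw [innerPot_of_not_dvd β hd, innerPot_of_not_dvd β hd', add_right_comm d,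
      outerPot_periodic β hq hL d, outerPot_periodic β hq hL (d + 2 * q)]

variable [NeZero L]

lemma cycDist_natCast_mul_succ_le (k r : ℕ) :
    cycDist ((k * (r + 1) : ℕ) : ZMod L) β ≤ k + cycDist ((k * r : ℕ) : ZMod L) β := by
  rw [mul_add_one]; exact cycDist_natCast_add_le _ _ _

lemma cycDist_natCast_mul_le_succ (k r : ℕ) :
    cycDist ((k * r : ℕ) : ZMod L) β ≤ k + cycDist ((k * (r + 1) : ℕ) : ZMod L) β := by
  rw [mul_add_one]; exact cycDist_natCast_le_add _ _ _

lemma outerPot_two_mul (hq : 0 < q) (r : ℕ) :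
    outerPot q β (2 * q * r) = cycDist (((2 * q - 2) * r : ℕ) : ZMod L) β := by
  have h := outerPot_mul_add β (q := q) (r := r) (t := 0) (by omega)
  have := cycDist_natCast_mul_le_succ β (2 * q - 2) r
  rw [add_zero] at h
  omega

lemma dist_outerPot_succ_le (hq : 0 < q) (d : ℕ) :
    (outerPot q β d).dist (outerPot q β (d + 1)) ≤ 1 := by
  unfold Nat.dist
  obtain ⟨r, t, ht, rfl⟩ := Nat.exists_eq_mul_add_lt (by omega : 0 < 2 * q) d
  rcases Nat.lt_or_ge (t + 1) (2 * q) with hlt | hge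
  · rw [add_assoc, outerPot_mul_add β hlt, outerPot_mul_add β ht]
    omega
  · rw [show 2 * q * r + t + 1 = 2 * q * (r + 1) + 0 by rw [mul_add_one]; omega,
      outerPot_mul_add β (r := r + 1) (t := 0) (by omega), outerPot_mul_add β ht]
    have := cycDist_natCast_mul_succ_le β (2 * q - 2) r
    have := cycDist_natCast_mul_le_succ β (2 * q - 2) (r + 1)
    omega

lemma dist_outerPot_add_two_mul_le (hq : 0 < q) (d : ℕ) :
    (outerPot q β d).dist (outerPot q β (d + 2 * q)) ≤ 2 * q - 2 := by
  unfold Nat.dist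
  obtain ⟨r, t, ht, rfl⟩ := Nat.exists_eq_mul_add_lt (by omega : 0 < 2 * q) d
  rw [show 2 * q * r + t + 2 * q = 2 * q * (r + 1) + t by rw [mul_add_one]; omega,
    outerPot_mul_add β ht, outerPot_mul_add β ht]
  have := cycDist_natCast_mul_succ_le β (2 * q - 2) r
  have := cycDist_natCast_mul_le_succ β (2 * q - 2) r
  have := cycDist_natCast_mul_succ_le β (2 * q - 2) (r + 1)
  have := cycDist_natCast_mul_le_succ β (2 * q - 2) (r + 1)
  omega

lemma outerPot_lt_succ_of_dvd (hq : 0 < q) {d : ℕ} (hd : 2 * q ∣ d) :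
    outerPot q β d < outerPot q β (d + 1) := by
  obtain ⟨r, rfl⟩ := hd
  rw [outerPot_two_mul β hq, outerPot_mul_add β (by omega)]
  have := cycDist_natCast_mul_le_succ β (2 * q - 2) r
  omega

lemma outerPot_succ_lt_of_dvd (hq : 0 < q) {d : ℕ} (hd : 2 * q ∣ d + 1) :
    outerPot q β (d + 1) < outerPot q β d := by
  obtain ⟨r, t, ht, rfl⟩ := Nat.exists_eq_mul_add_lt (by omega : 0 < 2 * q) d
  have : 2 * q ≤ t + 1 := Nat.le_of_dvd (by omega)
    ((Nat.dvd_add_right (dvd_mul_right _ _)).mp (by rwa [add_assoc] at hd))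
  rw [show 2 * q * r + t + 1 = 2 * q * (r + 1) by rw [mul_add_one]; omega,
    outerPot_two_mul β hq, outerPot_mul_add β ht]
  have := cycDist_natCast_mul_succ_le β (2 * q - 2) r
  omega

lemma dist_outerPot_innerPot_zero_le (hq : 0 < q) (d : ℕ) :
    (outerPot q β d).dist (innerPot q β d 0) ≤ 1 := by
  unfold Nat.dist
  by_cases hd : 2 * q ∣ d
  · obtain ⟨r, rfl⟩ := hd
    rw [innerPot_two_mul β hq, outerPot_two_mul β hq]
    have := cycDist_natCast_add_le ((2 * q - 2) * r) (0 + 1) β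
    have := cycDist_natCast_le_add ((2 * q - 2) * r) (0 + 1) β
    omega
  · rw [innerPot_of_not_dvd β hd]
    have := dist_outerPot_add_two_mul_le β hq d
    unfold Nat.dist at this
    omega

lemma dist_innerPot_succ_le (hq : 0 < q) (d x : ℕ) :
    (innerPot q β d x).dist (innerPot q β d (x + 1)) ≤ 1 := by
  unfold Nat.dist
  by_cases hd : 2 * q ∣ d
  · obtain ⟨r, rfl⟩ := hd
    rw [innerPot_two_mul β hq, innerPot_two_mul β hq, ← add_assoc _ (x + 1) 1]
    have := cycDist_natCast_add_le ((2 * q - 2) * r + (x + 1)) 1 β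
    have := cycDist_natCast_le_add ((2 * q - 2) * r + (x + 1)) 1 β
    omega
  · rw [innerPot_of_not_dvd β hd, innerPot_of_not_dvd β hd]
    omega

lemma dist_innerPot_outerPot_add_two_mul_le (hq : 2 ≤ q) (d : ℕ) :
    (innerPot q β d (2 * q - 4)).dist (outerPot q β (d + 2 * q)) ≤ 1 := by
  unfold Nat.dist
  by_cases hd : 2 * q ∣ d
  · obtain ⟨r, rfl⟩ := hd
    rw [innerPot_two_mul β (by omega), ← mul_add_one, outerPot_two_mul β (by omega),
      show (2 * q - 2) * (r + 1) = (2 * q - 2) * r + (2 * q - 4 + 1) + 1 by rw [mul_add_one]; omega]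
    have := cycDist_natCast_add_le ((2 * q - 2) * r + (2 * q - 4 + 1)) 1 β
    have := cycDist_natCast_le_add ((2 * q - 2) * r + (2 * q - 4 + 1)) 1 β
    omega
  · rw [innerPot_of_not_dvd β hd]
    have := dist_outerPot_add_two_mul_le β (q := q) (by omega) d
    unfold Nat.dist at this
    omega

end Potential

section Barrier

variable {p q u : ℕ}

lemma mul_eq_two_mul_mul (hu : p = 2 * u) : p * q = 2 * q * u := by
  subst hu; ring

lemma mul_sub_one_eq (hu : p = 2 * u) : p * (q - 1) = (2 * q - 2) * u := by
  subst hu; rw [Nat.mul_sub, Nat.sub_mul]; ring_nf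

lemma exists_eq_add_natCast {n : ℕ} [NeZero n] (j i : ZMod n) : ∃ d : ℕ, i = j + d :=
  ⟨(i - j).val, by rw [ZMod.natCast_zmod_val, add_sub_cancel]⟩

lemma barrierGraph_adj_inl_add_one [Nontrivial (ZMod (p * q))] (i : ZMod (p * q)) :
    (barrierGraph p q).Adj (.inl i) (.inl (i + 1)) :=
  (SimpleGraph.fromRel_adj _ _ _).mpr ⟨by simp, .inl (.inl ⟨i, rfl, rfl⟩)⟩

lemma barrierGraph_adj_inl_inr (m : ZMod (p * q)) {x : Fin (2 * q - 3)} (hx : x.val = 0) :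
    (barrierGraph p q).Adj (.inl m) (.inr (m, x)) :=
  (SimpleGraph.fromRel_adj _ _ _).mpr ⟨by simp, .inl (.inr (.inl ⟨m, x, hx, rfl, rfl⟩))⟩

lemma barrierGraph_adj_inr_inr (m : ZMod (p * q)) {x y : Fin (2 * q - 3)}
    (hxy : y.val = x.val + 1) : (barrierGraph p q).Adj (.inr (m, x)) (.inr (m, y)) :=
  (SimpleGraph.fromRel_adj _ _ _).mpr
    ⟨by simp [Fin.ext_iff, hxy], .inl (.inr (.inr (.inl ⟨m, x, y, hxy, rfl, rfl⟩)))⟩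

lemma barrierGraph_adj_inr_inl (m : ZMod (p * q)) {x : Fin (2 * q - 3)} (hx : x.val = 2 * q - 4) :
    (barrierGraph p q).Adj (.inr (m, x)) (.inl (m + ((2 * q : ℕ) : ZMod (p * q)))) :=
  (SimpleGraph.fromRel_adj _ _ _).mpr ⟨by simp, .inl (.inr (.inr (.inr ⟨m, x, hx, rfl, rfl⟩)))⟩

lemma inl_add_natCast_mem_innerCycle_iff (hu : p = 2 * u) (j : ZMod (p * q)) (d : ℕ) :
    .inl (j + d) ∈ innerCycle p q j ↔ 2 * q ∣ d := by
  constructor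
  · rintro ⟨r, h | ⟨x, h⟩⟩
    · have h' : (d : ZMod (p * q)) = ((2 * q * r : ℕ) : ZMod (p * q)) :=
        add_left_cancel (Sum.inl.inj h)
      rw [ZMod.natCast_eq_natCast_iff, mul_eq_two_mul_mul hu] at h'
      exact Nat.modEq_zero_iff_dvd.mp
        ((h'.of_mul_right u).trans (Nat.modEq_zero_iff_dvd.mpr (dvd_mul_right _ r)))
    · cases h
  · rintro ⟨r, rfl⟩
    exact ⟨r, .inl rfl⟩

lemma inr_mem_innerCycle_iff (j m : ZMod (p * q)) (x : Fin (2 * q - 3)) :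
    .inr (m, x) ∈ innerCycle p q j ↔ .inl m ∈ innerCycle p q j := by
  simp [innerCycle]

lemma inl_add_two_mul_mem_innerCycle_iff (hu : p = 2 * u) [NeZero (p * q)] (j m : ZMod (p * q)) :
    .inl (m + ((2 * q : ℕ) : ZMod (p * q))) ∈ innerCycle p q j ↔ .inl m ∈ innerCycle p q j := by
  obtain ⟨d, rfl⟩ := exists_eq_add_natCast j m
  rw [add_assoc, ← Nat.cast_add, inl_add_natCast_mem_innerCycle_iff hu,
    inl_add_natCast_mem_innerCycle_iff hu, Nat.dvd_add_self_right]

lemma not_inl_mem_innerCycle_and_add_one (hu : p = 2 * u) (hq : 0 < q) [NeZero (p * q)]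
    (j m : ZMod (p * q)) :
    ¬(.inl m ∈ innerCycle p q j ∧ .inl (m + 1) ∈ innerCycle p q j) := by
  rintro ⟨h₀, h₁⟩
  obtain ⟨d, rfl⟩ := exists_eq_add_natCast j m
  rw [add_assoc, ← Nat.cast_add_one, inl_add_natCast_mem_innerCycle_iff hu] at h₁
  rw [inl_add_natCast_mem_innerCycle_iff hu] at h₀
  have := Nat.le_of_dvd one_pos ((Nat.dvd_add_right h₀).mp h₁)
  omega

lemma exists_eq_inl_of_adj_of_not_mem (hu : p = 2 * u) [NeZero (p * q)] {j : ZMod (p * q)}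
    {a c : BV p q} (ha : a ∈ innerCycle p q j) (hac : (barrierGraph p q).Adj a c)
    (hc : c ∉ innerCycle p q j) :
    ∃ i, (a = .inl i ∧ c = .inl (i + 1)) ∨ (a = .inl (i + 1) ∧ c = .inl i) := by
  rcases ((SimpleGraph.fromRel_adj _ _ _).mp hac).2 with
    (⟨i, rfl, rfl⟩ | ⟨m, x, -, rfl, rfl⟩ | ⟨m, x, y, -, rfl, rfl⟩ | ⟨m, x, -, rfl, rfl⟩) |
    (⟨i, rfl, rfl⟩ | ⟨m, x, -, rfl, rfl⟩ | ⟨m, x, y, -, rfl, rfl⟩ | ⟨m, x, -, rfl, rfl⟩)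
  · exact ⟨i, .inl ⟨rfl, rfl⟩⟩
  · exact absurd ((inr_mem_innerCycle_iff j m x).mpr ha) hc
  · exact absurd ((inr_mem_innerCycle_iff j m y).mpr ((inr_mem_innerCycle_iff j m x).mp ha)) hc
  · exact absurd ((inl_add_two_mul_mem_innerCycle_iff hu j m).mpr
      ((inr_mem_innerCycle_iff j m x).mp ha)) hc
  · exact ⟨i, .inr ⟨rfl, rfl⟩⟩
  · exact absurd ((inr_mem_innerCycle_iff j m x).mp ha) hc
  · exact absurd ((inr_mem_innerCycle_iff j m x).mpr ((inr_mem_innerCycle_iff j m y).mp ha)) hc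
  · exact absurd ((inr_mem_innerCycle_iff j m x).mpr
      ((inl_add_two_mul_mem_innerCycle_iff hu j m).mp ha)) hc

/-- Position `(2q-2) r + t` of `C^in_j` is the `t`-th vertex of the inner path `P_{j+2qr}`. The
first conjunct of the condition only supplies the bound for `Fin`; it holds whenever `q ≥ 2`. -/
def innerCycleVertex (p q : ℕ) (j : ZMod (p * q)) (n : ℕ) : BV p q :=
  if h : n % (2 * q - 2) - 1 < 2 * q - 3 ∧ n % (2 * q - 2) ≠ 0 then
    .inr (j + ((2 * q * (n / (2 * q - 2)) : ℕ) : ZMod (p * q)), ⟨n % (2 * q - 2) - 1, h.1⟩)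
  else .inl (j + ((2 * q * (n / (2 * q - 2)) : ℕ) : ZMod (p * q)))

lemma innerCycleVertex_mul (hq : 2 ≤ q) (j : ZMod (p * q)) (r : ℕ) :
    innerCycleVertex p q j ((2 * q - 2) * r) = .inl (j + ((2 * q * r : ℕ) : ZMod (p * q))) := by
  rw [innerCycleVertex, dif_neg (by simp), Nat.mul_div_cancel_left _ (by omega)]

lemma innerCycleVertex_mul_add (hq : 2 ≤ q) (j : ZMod (p * q)) (r : ℕ) (x : Fin (2 * q - 3)) :
    innerCycleVertex p q j ((2 * q - 2) * r + (x.val + 1)) =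
      .inr (j + ((2 * q * r : ℕ) : ZMod (p * q)), x) := by
  have hx : x.val + 1 < 2 * q - 2 := by omega
  have hmod : ((2 * q - 2) * r + (x.val + 1)) % (2 * q - 2) = x.val + 1 := by
    rw [Nat.mul_add_mod, Nat.mod_eq_of_lt hx]
  have hdiv : ((2 * q - 2) * r + (x.val + 1)) / (2 * q - 2) = r := by
    rw [Nat.mul_add_div (by omega), Nat.div_eq_of_lt hx, add_zero]
  rw [innerCycleVertex, dif_pos (by omega)]
  simp only [hmod, hdiv, Nat.add_sub_cancel]

lemma exists_eq_mul_or_eq_mul_add (hq : 2 ≤ q) (n : ℕ) :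
    (∃ r, n = (2 * q - 2) * r) ∨ ∃ r, ∃ x : Fin (2 * q - 3), n = (2 * q - 2) * r + (x.val + 1) := by
  obtain ⟨r, t, ht, rfl⟩ := Nat.exists_eq_mul_add_lt (by omega : 0 < 2 * q - 2) n
  rcases t with _ | t
  · exact .inl ⟨r, rfl⟩
  · exact .inr ⟨r, ⟨t, by omega⟩, rfl⟩

lemma innerCycleVertex_periodic (hu : p = 2 * u) (hq : 2 ≤ q) (j : ZMod (p * q)) :
    Function.Periodic (innerCycleVertex p q j) (p * (q - 1)) := by
  have key (r : ℕ) : ((2 * q * (r + u) : ℕ) : ZMod (p * q)) = ((2 * q * r : ℕ) : ZMod (p * q)) := by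
    rw [mul_add, ZMod.natCast_add_eq_of_dvd (dvd_of_eq (mul_eq_two_mul_mul hu))]
  intro n
  rw [mul_sub_one_eq hu]
  rcases exists_eq_mul_or_eq_mul_add hq n with ⟨r, rfl⟩ | ⟨r, x, rfl⟩
  · rw [← mul_add, innerCycleVertex_mul hq, innerCycleVertex_mul hq, key]
  · rw [add_right_comm, ← mul_add, innerCycleVertex_mul_add hq, innerCycleVertex_mul_add hq, key]

lemma innerCycleVertex_adj_succ (hq : 2 ≤ q) (j : ZMod (p * q)) (n : ℕ) :
    (barrierGraph p q).Adj (innerCycleVertex p q j n) (innerCycleVertex p q j (n + 1)) := by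
  rcases exists_eq_mul_or_eq_mul_add hq n with ⟨r, rfl⟩ | ⟨r, x, rfl⟩
  · rw [innerCycleVertex_mul hq, show (2 * q - 2) * r + 1 =
      (2 * q - 2) * r + ((⟨0, by omega⟩ : Fin (2 * q - 3)).val + 1) from rfl,
      innerCycleVertex_mul_add hq]
    exact barrierGraph_adj_inl_inr _ rfl
  · rw [innerCycleVertex_mul_add hq]
    by_cases hx : x.val + 1 < 2 * q - 3
    · rw [show (2 * q - 2) * r + (x.val + 1) + 1 =
        (2 * q - 2) * r + ((⟨x.val + 1, hx⟩ : Fin (2 * q - 3)).val + 1) from rfl,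
        innerCycleVertex_mul_add hq]
      exact barrierGraph_adj_inr_inr _ rfl
    · rw [show (2 * q - 2) * r + (x.val + 1) + 1 = (2 * q - 2) * (r + 1) by
          rw [mul_add_one]; omega,
        innerCycleVertex_mul hq, mul_add_one, Nat.cast_add, ← add_assoc]
      exact barrierGraph_adj_inr_inl _ (by omega)

lemma exists_innerCycleVertex_eq (hq : 2 ≤ q) {j : ZMod (p * q)} {b : BV p q}
    (hb : b ∈ innerCycle p q j) : ∃ n, innerCycleVertex p q j n = b := by
  obtain ⟨r, rfl | ⟨x, rfl⟩⟩ := hb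
  · exact ⟨_, innerCycleVertex_mul hq j r⟩
  · exact ⟨_, innerCycleVertex_mul_add hq j r x⟩

def barrierPot (p q : ℕ) (j : ZMod (p * q)) (β : ZMod (p * (q - 1))) : BV p q → ℕ
  | .inl i => outerPot q β (i - j).val
  | .inr (m, x) => innerPot q β (m - j).val x.val

lemma barrierPot_inl (hu : p = 2 * u) (hq : 0 < q) (j : ZMod (p * q)) (β : ZMod (p * (q - 1)))
    (d : ℕ) : barrierPot p q j β (.inl (j + d)) = outerPot q β d := by
  have h := (outerPot_periodic β hq (dvd_of_eq (mul_sub_one_eq hu))).map_mod_nat d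
  rw [← mul_eq_two_mul_mul hu] at h
  rwa [barrierPot, add_sub_cancel_left, ZMod.val_natCast]

lemma barrierPot_inr (hu : p = 2 * u) (hq : 0 < q) (j : ZMod (p * q)) (β : ZMod (p * (q - 1)))
    (d : ℕ) (x : Fin (2 * q - 3)) :
    barrierPot p q j β (.inr (j + d, x)) = innerPot q β d x.val := by
  have h := (innerPot_periodic β hq (dvd_of_eq (mul_sub_one_eq hu)) x.val).map_mod_nat d
  rw [← mul_eq_two_mul_mul hu] at h
  rwa [barrierPot, add_sub_cancel_left, ZMod.val_natCast]

lemma dist_barrierPot_le_of_barrierAdj (hu : p = 2 * u) (hq : 2 ≤ q) [NeZero (p * q)]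
    [NeZero (p * (q - 1))] (j : ZMod (p * q)) (β : ZMod (p * (q - 1))) {v w : BV p q}
    (h : barrierAdj p q v w) : (barrierPot p q j β v).dist (barrierPot p q j β w) ≤ 1 := by
  rcases h with ⟨i, rfl, rfl⟩ | ⟨m, x, hx, rfl, rfl⟩ | ⟨m, x, y, hxy, rfl, rfl⟩ |
    ⟨m, x, hx, rfl, rfl⟩
  · obtain ⟨d, rfl⟩ := exists_eq_add_natCast j i
    rw [add_assoc, ← Nat.cast_add_one, barrierPot_inl hu (by omega),
      barrierPot_inl hu (by omega)]
    exact dist_outerPot_succ_le β (by omega) d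
  · obtain ⟨d, rfl⟩ := exists_eq_add_natCast j m
    rw [barrierPot_inl hu (by omega), barrierPot_inr hu (by omega), hx]
    exact dist_outerPot_innerPot_zero_le β (by omega) d
  · obtain ⟨d, rfl⟩ := exists_eq_add_natCast j m
    rw [barrierPot_inr hu (by omega), barrierPot_inr hu (by omega), hxy]
    exact dist_innerPot_succ_le β (by omega) d x.val
  · obtain ⟨d, rfl⟩ := exists_eq_add_natCast j m
    rw [barrierPot_inr hu (by omega), add_assoc, ← Nat.cast_add, barrierPot_inl hu (by omega), hx]
    exact dist_innerPot_outerPot_add_two_mul_le β hq d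

lemma barrierPot_le_of_adj (hu : p = 2 * u) (hq : 2 ≤ q) [NeZero (p * q)]
    [NeZero (p * (q - 1))] (j : ZMod (p * q)) (β : ZMod (p * (q - 1))) {v w : BV p q}
    (h : (barrierGraph p q).Adj v w) : barrierPot p q j β v ≤ barrierPot p q j β w + 1 := by
  have key := ((SimpleGraph.fromRel_adj _ _ _).mp h).2.elim
    (dist_barrierPot_le_of_barrierAdj hu hq j β)
    (fun h ↦ Nat.dist_comm _ _ ▸ dist_barrierPot_le_of_barrierAdj hu hq j β h)
  unfold Nat.dist at key
  omega

lemma barrierPot_lt_of_adj_of_not_mem (hu : p = 2 * u) (hq : 0 < q) [NeZero (p * q)]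
    [NeZero (p * (q - 1))] {j : ZMod (p * q)} (β : ZMod (p * (q - 1))) {a c : BV p q}
    (ha : a ∈ innerCycle p q j) (hac : (barrierGraph p q).Adj a c)
    (hc : c ∉ innerCycle p q j) : barrierPot p q j β a < barrierPot p q j β c := by
  obtain ⟨i, ⟨rfl, rfl⟩ | ⟨rfl, rfl⟩⟩ := exists_eq_inl_of_adj_of_not_mem hu ha hac hc
  · obtain ⟨d, rfl⟩ := exists_eq_add_natCast j i
    rw [inl_add_natCast_mem_innerCycle_iff hu] at ha
    rw [add_assoc, ← Nat.cast_add_one, barrierPot_inl hu hq, barrierPot_inl hu hq]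
    exact outerPot_lt_succ_of_dvd β hq ha
  · obtain ⟨d, rfl⟩ := exists_eq_add_natCast j i
    rw [add_assoc, ← Nat.cast_add_one, inl_add_natCast_mem_innerCycle_iff hu] at ha
    rw [add_assoc, ← Nat.cast_add_one, barrierPot_inl hu hq, barrierPot_inl hu hq]
    exact outerPot_succ_lt_of_dvd β hq ha

lemma barrierPot_innerCycleVertex (hu : p = 2 * u) (hq : 2 ≤ q) [NeZero (p * (q - 1))]
    (j : ZMod (p * q)) (β : ZMod (p * (q - 1))) (n : ℕ) :
    barrierPot p q j β (innerCycleVertex p q j n) = cycDist (n : ZMod (p * (q - 1))) β := by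
  rcases exists_eq_mul_or_eq_mul_add hq n with ⟨r, rfl⟩ | ⟨r, x, rfl⟩
  · rw [innerCycleVertex_mul hq, barrierPot_inl hu (by omega), outerPot_two_mul β (by omega)]
  · rw [innerCycleVertex_mul_add hq, barrierPot_inr hu (by omega), innerPot_two_mul β (by omega)]

theorem dist_lt_dist_of_adj_of_not_mem (hu : p = 2 * u) (hq : 2 ≤ q) [NeZero (p * q)]
    [NeZero (p * (q - 1))] {j : ZMod (p * q)} {a b c : BV p q} (ha : a ∈ innerCycle p q j)
    (hb : b ∈ innerCycle p q j) (hac : (barrierGraph p q).Adj a c)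
    (hc : c ∉ innerCycle p q j) :
    (barrierGraph p q).dist a b < (barrierGraph p q).dist c b := by
  obtain ⟨m, rfl⟩ := exists_innerCycleVertex_eq hq ha
  obtain ⟨n, rfl⟩ := exists_innerCycleVertex_eq hq hb
  set φ := barrierPot p q j (n : ZMod (p * (q - 1)))
  obtain ⟨hreach, hdist⟩ := SimpleGraph.reachable_and_dist_le_cycDist
    (innerCycleVertex_periodic hu hq j) (innerCycleVertex_adj_succ hq j) m n
  have hφa : φ (innerCycleVertex p q j m) = cycDist (m : ZMod (p * (q - 1))) n :=
    barrierPot_innerCycleVertex hu hq j _ m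
  have hφb : φ (innerCycleVertex p q j n) = 0 :=
    (barrierPot_innerCycleVertex hu hq j _ n).trans (cycDist_self _)
  have hφc : φ (innerCycleVertex p q j m) < φ c :=
    barrierPot_lt_of_adj_of_not_mem hu (by omega) _ ha hac hc
  have hc_le : φ c ≤ (barrierGraph p q).dist c (innerCycleVertex p q j n) + φ _ :=
    (hac.symm.reachable.trans hreach).le_dist_add_of_forall_adj
      (fun _ _ ↦ barrierPot_le_of_adj hu hq j _)
  omega

end Barrier

/-- (1) For `a, b` on the same inner cycle and `c` a neighbor of `a` not on
that inner cycle, `dist(a,b) < dist(c,b)`. (2) Consequently, if every token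
lies on the same inner cycle as its target, then a swap along any outer-cycle
edge `(v_m, v_{m+1})` moves both participating tokens strictly farther from
their destinations (i.e. it is not locally optimal). -/
theorem stmt13 (p q : ℕ) (hp : Even p) (hp2 : 2 ≤ p) (hq : 2 ≤ q) :
    (∀ (j : ZMod (p * q)) (a b c : BV p q),
      a ∈ innerCycle p q j → b ∈ innerCycle p q j →
      (barrierGraph p q).Adj a c → c ∉ innerCycle p q j →
      (barrierGraph p q).dist a b < (barrierGraph p q).dist c b) ∧
    (∀ (T : Type) (f tgt : T ≃ BV p q),
      (∀ t : T, ∃ j : ZMod (p * q),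
        f t ∈ innerCycle p q j ∧ tgt t ∈ innerCycle p q j) →
      ∀ m : ZMod (p * q),
        (barrierGraph p q).dist (Sum.inl m) (tgt (f.symm (Sum.inl m))) <
          (barrierGraph p q).dist (Sum.inl (m + 1)) (tgt (f.symm (Sum.inl m))) ∧
        (barrierGraph p q).dist (Sum.inl (m + 1)) (tgt (f.symm (Sum.inl (m + 1)))) <
          (barrierGraph p q).dist (Sum.inl m) (tgt (f.symm (Sum.inl (m + 1))))) := by
  obtain ⟨u, hu⟩ := hp.two_dvd
  have : NeZero (p * q) := ⟨Nat.mul_ne_zero (by omega) (by omega)⟩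
  have : NeZero (p * (q - 1)) := ⟨Nat.mul_ne_zero (by omega) (by omega)⟩
  have : Fact (1 < p * q) := ⟨by nlinarith⟩
  refine ⟨fun j a b c ↦ dist_lt_dist_of_adj_of_not_mem hu hq, fun T f tgt htok m ↦ ⟨?_, ?_⟩⟩
  · obtain ⟨j, hf, ht⟩ := htok (f.symm (.inl m))
    rw [Equiv.apply_symm_apply] at hf
    exact dist_lt_dist_of_adj_of_not_mem hu hq hf ht (barrierGraph_adj_inl_add_one m)
      fun h ↦ not_inl_mem_innerCycle_and_add_one hu (by omega) j m ⟨hf, h⟩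
  · obtain ⟨j, hf, ht⟩ := htok (f.symm (.inl (m + 1)))
    rw [Equiv.apply_symm_apply] at hf
    exact dist_lt_dist_of_adj_of_not_mem hu hq hf ht (barrierGraph_adj_inl_add_one m).symm
      fun h ↦ not_inl_mem_innerCycle_and_add_one hu (by omega) j m ⟨h, hf⟩
end
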